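/- arXiv:1802.07462 — 9 statements merged into one kernel-verified Lean document; each statement's English description precedes it below -/
import Mathlib

section
/- (Converse for the non-asymptotic minimum average erasure cost.) Let (X_i,Y_i), i=1..n, be i.i.d. on finite 𝒳×𝒴, c: 𝒳×X̂ → [0,∞), and let f_n: 𝒳^n → X̂^n be a stochastic encoder with output X̂^n = f_n(X^n) (so Y^n − X^n − X̂^n). If I(Y^n; X̂^n) ≤ ε and E[(1/n)Σ_i c(X_i, X̂_i)] ≤ Γ, then Γ ≥ min over RVs X̂ with Y − X − X̂ and I(Y; X̂) ≤ ε/n of E[c(X, X̂)]. -/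
open scoped BigOperators

noncomputable def MI {α β : Type*} [Fintype α] [Fintype β] (p : α → β → ℝ) : ℝ :=
  ∑ a, ∑ b, p a b * Real.log (p a b / ((∑ b', p a b') * (∑ a', p a' b)))

def IsPMF2 {α β : Type*} [Fintype α] [Fintype β] (p : α → β → ℝ) : Prop :=
  (∀ a b, 0 ≤ p a b) ∧ ∑ a, ∑ b, p a b = 1

def IsChannel {α β : Type*} [Fintype β] (K : α → β → ℝ) : Prop :=
  (∀ a b, 0 ≤ K a b) ∧ ∀ a, ∑ b, K a b = 1

/-- Joint pmf of `(Y^n, X^n, X̂^n)` where `(X_i,Y_i)` are i.i.d. `∼ pxy`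
and `X̂^n` is produced from `X^n` by the channel `W`. -/
noncomputable def iidJoint {X Y Xh : Type*} [Fintype X] (n : ℕ) (pxy : X → Y → ℝ)
    (W : (Fin n → X) → (Fin n → Xh) → ℝ) :
    (Fin n → Y) → (Fin n → X) → (Fin n → Xh) → ℝ :=
  fun yn xn zn => (∏ i, pxy (xn i) (yn i)) * W xn zn

/-- Expected additive cost `E[(1/n) ∑_i c(X_i, X̂_i)]` for the i.i.d. source with
one-letter joint `pxy` and encoder `W`. -/
noncomputable def costn {X Y Xh : Type*} [Fintype X] [Fintype Y] [Fintype Xh] (n : ℕ)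
    (pxy : X → Y → ℝ) (W : (Fin n → X) → (Fin n → Xh) → ℝ) (c : X → Xh → ℝ) : ℝ :=
  ∑ xn, ∑ zn, (∏ i, ∑ y, pxy (xn i) y) * W xn zn * ((1 / (n : ℝ)) * ∑ i, c (xn i) (zn i))

/-- Single-letter joint pmf of `(Y, X̂)` under the Markov chain `Y − X − X̂`. -/
noncomputable def singleYZ {X Y Xh : Type*} [Fintype X] (pxy : X → Y → ℝ)
    (K : X → Xh → ℝ) : Y → Xh → ℝ :=
  fun y z => ∑ x, pxy x y * K x z

/-- Single-letter expected cost `E[c(X, X̂)]`. -/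
noncomputable def singleCost {X Y Xh : Type*} [Fintype X] [Fintype Y] [Fintype Xh]
    (pxy : X → Y → ℝ) (K : X → Xh → ℝ) (c : X → Xh → ℝ) : ℝ :=
  ∑ x, ∑ z, (∑ y, pxy x y) * K x z * c x z

/-!
Take for `K` the average over `i` of the channels `Kᵢ` from `Xᵢ` to `X̂ᵢ`. Then the single-letter
pair `(Y, X̂)` has the averaged law of the pairs `(Yᵢ, X̂ᵢ)`, and the single-letter cost of `K` is
the average of the costs of the `Kᵢ`, which is `costn ≤ Γ`. Mutual information is convex in the
channel for a fixed input law, so `I(Y; X̂) ≤ (1/n) ∑ᵢ I(Yᵢ; X̂ᵢ)`; and because the `Yᵢ` are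
independent, `∑ᵢ I(Yᵢ; X̂ᵢ) ≤ I(Yⁿ; X̂ⁿ) ≤ ε`, the gap being a Kullback–Leibler divergence, which is
nonnegative by Gibbs' inequality. Hence `K` is admissible and costs at most `Γ`.
-/

open Finset Real

theorem Finset.sum_fiberwise_eq_sum_comp {ι κ M : Type*} [Fintype κ] [DecidableEq κ]
    [AddCommMonoid M] (s : Finset ι) (g : ι → κ) (f : κ → ι → M) :
    ∑ j, ∑ i ∈ s with g i = j, f j i = ∑ i ∈ s, f (g i) i := by
  rw [← sum_fiberwise s g fun i => f (g i) i]
  exact sum_congr rfl fun j _ => sum_congr rfl fun i hi => by rw [(mem_filter.1 hi).2]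

theorem sum_filter_apply_eq_prod_erase {ι α R : Type*} [Fintype ι] [DecidableEq ι]
    [Fintype α] [DecidableEq α] [CommSemiring R] (f : ι → α → R) (i : ι) (a : α) :
    ∑ g : ι → α with g i = a, ∏ j ∈ univ.erase i, f j (g j) =
      ∏ j ∈ univ.erase i, ∑ b, f j b := by
  let t : ι → Finset α := Function.update (fun _ => univ) i {a}
  let F : ι → α → R := Function.update f i fun _ => 1
  have hF : ∀ g : ι → α, ∏ j, F j (g j) = ∏ j ∈ univ.erase i, f j (g j) := fun g => by
    rw [← mul_prod_erase univ _ (mem_univ i)]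
    simp only [F, Function.update_self, one_mul]
    exact prod_congr rfl fun j hj => by rw [Function.update_of_ne (ne_of_mem_erase hj)]
  have ht : ∏ j, ∑ b ∈ t j, F j b = ∏ j ∈ univ.erase i, ∑ b, f j b := by
    rw [← mul_prod_erase univ _ (mem_univ i)]
    simp only [t, F, Function.update_self, sum_singleton, one_mul]
    exact prod_congr rfl fun j hj => by simp only [Function.update_of_ne (ne_of_mem_erase hj)]
  rw [← ht, prod_univ_sum, Fintype.piFinset_update_singleton_eq_filter_piFinset_eq
    (fun _ => univ) i (mem_univ a), Fintype.piFinset_univ]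
  exact sum_congr rfl fun g _ => (hF g).symm

theorem sum_filter_apply_eq_mul_prod_erase {ι α R : Type*} [Fintype ι] [DecidableEq ι]
    [Fintype α] [DecidableEq α] [CommSemiring R] (f : ι → α → R) (i : ι) (a : α) :
    ∑ g : ι → α with g i = a, ∏ j, f j (g j) = f i a * ∏ j ∈ univ.erase i, ∑ b, f j b := by
  rw [← sum_filter_apply_eq_prod_erase, mul_sum]
  refine sum_congr rfl fun g hg => ?_
  rw [← mul_prod_erase univ _ (mem_univ i), (mem_filter.1 hg).2]

theorem sum_prod_div_sum_le_one {ι Y : Type*} [Fintype ι] [DecidableEq ι] [Fintype Y]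
    {f : ι → Y → ℝ} (hf : ∀ i y, 0 ≤ f i y) :
    ∑ yn : ι → Y, ∏ i, f i (yn i) / ∑ y, f i y ≤ 1 := by
  rw [← Fintype.prod_sum fun i y => f i y / ∑ y, f i y]
  refine prod_le_one (fun i _ => sum_nonneg fun y _ =>
    div_nonneg (hf i y) (sum_nonneg fun y _ => hf i y)) fun i _ => ?_
  rw [← sum_div]
  exact div_self_le_one _

theorem Real.sub_mul_le_mul_sub_log {a b t : ℝ} (ha : 0 ≤ a) (hb : 0 ≤ b)
    (hab : 0 < a → 0 < b) (ht : 0 < t) : a - b * t ≤ a * (log (a / b) - log t) := by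
  rcases ha.eq_or_lt with rfl | ha
  · simpa using mul_nonneg hb ht.le
  have hb := hab ha
  have hlog := one_sub_inv_le_log_of_pos (x := a / (b * t)) (by positivity)
  rw [log_div ha.ne' (by positivity), log_mul hb.ne' ht.ne', inv_div] at hlog
  rw [log_div ha.ne' hb.ne']
  calc a - b * t = a * (1 - b * t / a) := by field_simp
    _ ≤ _ := mul_le_mul_of_nonneg_left (by linarith) ha.le

theorem Real.log_sum_le {ι : Type*} (s : Finset ι) {a b : ι → ℝ}
    (ha : ∀ i ∈ s, 0 ≤ a i) (hb : ∀ i ∈ s, 0 ≤ b i) (hab : ∀ i ∈ s, 0 < a i → 0 < b i) :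
    (∑ i ∈ s, a i) * log ((∑ i ∈ s, a i) / ∑ i ∈ s, b i) ≤ ∑ i ∈ s, a i * log (a i / b i) := by
  rcases (sum_nonneg ha).eq_or_lt with hA | hA
  · rw [← hA, zero_mul, sum_eq_zero]
    intro i hi
    rw [(sum_eq_zero_iff_of_nonneg ha).1 hA.symm i hi, zero_mul]
  obtain ⟨i, hi, hai⟩ := exists_ne_zero_of_sum_ne_zero hA.ne'
  have hB : 0 < ∑ i ∈ s, b i :=
    (hab i hi ((ha i hi).lt_of_ne' hai)).trans_le (single_le_sum hb hi)
  have key := sum_le_sum fun i hi =>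
    sub_mul_le_mul_sub_log (ha i hi) (hb i hi) (hab i hi) (div_pos hA hB)
  simp only [sum_sub_distrib, mul_sub, ← sum_mul] at key
  rw [mul_div_cancel₀ _ hB.ne', sub_self] at key
  linarith

theorem Real.log_sum_le_of_weights {ι : Type*} (s : Finset ι) {w a b : ι → ℝ}
    (hw : ∀ i ∈ s, 0 ≤ w i) (ha : ∀ i ∈ s, 0 ≤ a i) (hb : ∀ i ∈ s, 0 ≤ b i)
    (hab : ∀ i ∈ s, 0 < a i → 0 < b i) :
    (∑ i ∈ s, w i * a i) * log ((∑ i ∈ s, w i * a i) / ∑ i ∈ s, w i * b i) ≤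
      ∑ i ∈ s, w i * (a i * log (a i / b i)) := by
  refine (log_sum_le s (fun i hi => mul_nonneg (hw i hi) (ha i hi))
    (fun i hi => mul_nonneg (hw i hi) (hb i hi)) fun i hi h => ?_).trans_eq
    (sum_congr rfl fun i hi => ?_)
  · exact mul_pos (pos_of_mul_pos_left h (ha i hi))
      (hab i hi (pos_of_mul_pos_right h (hw i hi)))
  · rcases (hw i hi).eq_or_lt with h | h
    · simp [← h]
    · rw [mul_div_mul_left _ _ h.ne']; ring

theorem Real.sum_mul_log_div_nonneg {ι : Type*} (s : Finset ι) {a b : ι → ℝ}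
    (ha : ∀ i ∈ s, 0 ≤ a i) (hb : ∀ i ∈ s, 0 ≤ b i) (hab : ∀ i ∈ s, 0 < a i → 0 < b i)
    (hsa : ∑ i ∈ s, a i = 1) (hsb : ∑ i ∈ s, b i ≤ 1) :
    0 ≤ ∑ i ∈ s, a i * log (a i / b i) := by
  refine le_trans ?_ (log_sum_le s ha hb hab)
  rw [hsa, one_mul, one_div, log_inv, neg_nonneg]
  exact log_nonpos (sum_nonneg hb) hsb

theorem Real.log_div_prod_mul_eq {ι : Type*} (s : Finset ι) {a c : ℝ} {P R C : ι → ℝ}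
    (ha : 0 < a) (hc : 0 < c) (hP : ∀ i ∈ s, 0 < P i) (hR : ∀ i ∈ s, 0 < R i)
    (hC : ∀ i ∈ s, 0 < C i) :
    log (a / ((∏ i ∈ s, P i) * c)) =
      ∑ i ∈ s, log (R i / (P i * C i)) + log (a / (c * ∏ i ∈ s, R i / C i)) := by
  have hRC : ∀ i ∈ s, 0 < R i / C i := fun i hi => div_pos (hR i hi) (hC i hi)
  have hsum : ∑ i ∈ s, log (R i / (P i * C i)) =
      ∑ i ∈ s, log (R i / C i) - ∑ i ∈ s, log (P i) := by
    rw [← sum_sub_distrib]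
    refine sum_congr rfl fun i hi => ?_
    rw [mul_comm, ← div_div, log_div (hRC i hi).ne' (hP i hi).ne']
  rw [hsum, log_div ha.ne' (mul_pos (prod_pos hP) hc).ne',
    log_div ha.ne' (mul_pos hc (prod_pos hRC)).ne',
    log_mul (prod_pos hP).ne' hc.ne', log_mul hc.ne' (prod_pos hRC).ne',
    log_prod (fun i hi => (hP i hi).ne'), log_prod (fun i hi => (hRC i hi).ne')]
  ring

theorem MI_sum_mul_le {ι Y Z : Type*} [Fintype ι] [Fintype Y] [Fintype Z] {w : ι → ℝ}
    (hw0 : ∀ i, 0 ≤ w i) (hw1 : ∑ i, w i = 1) {p : ι → Y → Z → ℝ}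
    (hp : ∀ i y z, 0 ≤ p i y z) {pY : Y → ℝ} (hrow : ∀ i y, ∑ z, p i y z = pY y) :
    MI (fun y z => ∑ i, w i * p i y z) ≤ ∑ i, w i * MI (p i) := by
  have hrow_mix : ∀ y, ∑ z, ∑ i, w i * p i y z = pY y := fun y => by
    rw [sum_comm]; simp_rw [← mul_sum, hrow, ← sum_mul, hw1, one_mul]
  have hcol_mix : ∀ y z, pY y * ∑ y', ∑ i, w i * p i y' z =
      ∑ i, w i * (pY y * ∑ y', p i y' z) := fun y z => by
    rw [sum_comm, mul_sum]; simp_rw [mul_sum, mul_left_comm (pY y)]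
  have hpos : ∀ i y z, 0 < p i y z → 0 < pY y * ∑ y', p i y' z := fun i y z h => mul_pos
    (hrow i y ▸ h.trans_le (single_le_sum (fun z _ => hp i y z) (mem_univ z)))
    (h.trans_le (single_le_sum (fun y _ => hp i y z) (mem_univ y)))
  unfold MI
  simp_rw [hrow_mix, hcol_mix, hrow]
  calc _ ≤ ∑ y, ∑ z, ∑ i, w i * (p i y z * log (p i y z / (pY y * ∑ y', p i y' z))) :=
        sum_le_sum fun y _ => sum_le_sum fun z _ => log_sum_le_of_weights univ
          (fun i _ => hw0 i) (fun i _ => hp i y z)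
          (fun i _ => mul_nonneg (hrow i y ▸ sum_nonneg fun z _ => hp i y z)
            (sum_nonneg fun y' _ => hp i y' z))
          fun i _ => hpos i y z
    _ = _ := by
        simp_rw [mul_sum]
        exact (sum_comm.trans (sum_congr rfl fun _ _ => sum_comm)).symm

noncomputable def mapJoint {α β α' β' : Type*} [Fintype α] [Fintype β] [DecidableEq α']
    [DecidableEq β'] (f : α → α') (g : β → β') (p : α → β → ℝ) (a' : α') (b' : β') : ℝ :=
  ∑ a with f a = a', ∑ b with g b = b', p a b

section mapJoint

variable {α β α' β' : Type*} [Fintype α] [Fintype β] [DecidableEq α'] [DecidableEq β']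
  (f : α → α') (g : β → β') {p : α → β → ℝ}

theorem mapJoint_nonneg (hp : ∀ a b, 0 ≤ p a b) (a' : α') (b' : β') :
    0 ≤ mapJoint f g p a' b' :=
  sum_nonneg fun a _ => sum_nonneg fun b _ => hp a b

theorem le_mapJoint (hp : ∀ a b, 0 ≤ p a b) (a : α) (b : β) :
    p a b ≤ mapJoint f g p (f a) (g b) :=
  calc p a b ≤ ∑ b' with g b' = g b, p a b' := single_le_sum (fun b' _ => hp a b') (by simp)
    _ ≤ _ := single_le_sum (f := fun a' => ∑ b' with g b' = g b, p a' b')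
      (fun _ _ => sum_nonneg fun _ _ => hp _ _) (by simp)

variable [Fintype β']

theorem sum_mapJoint_right (p : α → β → ℝ) (a' : α') :
    ∑ b', mapJoint f g p a' b' = ∑ a with f a = a', ∑ b, p a b := by
  simp_rw [mapJoint]
  rw [sum_comm]
  exact sum_congr rfl fun a _ => sum_fiberwise univ g (p a)

variable [Fintype α']

theorem sum_mapJoint_mul (p : α → β → ℝ) (h : α' → β' → ℝ) :
    ∑ a', ∑ b', mapJoint f g p a' b' * h a' b' = ∑ a, ∑ b, p a b * h (f a) (g b) := by
  simp_rw [mapJoint, sum_mul]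
  rw [← sum_fiberwise_eq_sum_comp univ f fun a' a => ∑ b, p a b * h a' (g b)]
  refine sum_congr rfl fun a' _ => ?_
  rw [sum_comm]
  exact sum_congr rfl fun a _ => sum_fiberwise_eq_sum_comp univ g fun b' b => p a b * h a' b'

end mapJoint

noncomputable def coordJoint {ι Y Z : Type*} [Fintype ι] [DecidableEq ι] [Fintype Y]
    [DecidableEq Y] [Fintype Z] [DecidableEq Z] (q : (ι → Y) → (ι → Z) → ℝ) (i : ι) :
    Y → Z → ℝ :=
  mapJoint (fun yn : ι → Y => yn i) (fun zn : ι → Z => zn i) q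

section Superadditivity

variable {ι Y Z : Type*} [Fintype ι] [DecidableEq ι] [Fintype Y] [DecidableEq Y] [Fintype Z]
  [DecidableEq Z] {q : (ι → Y) → (ι → Z) → ℝ} {pY : Y → ℝ}

theorem coordJoint_nonneg (hq : ∀ yn zn, 0 ≤ q yn zn) (i : ι) (y : Y) (z : Z) :
    0 ≤ coordJoint q i y z :=
  mapJoint_nonneg _ _ hq y z

theorem le_coordJoint (hq : ∀ yn zn, 0 ≤ q yn zn) (i : ι) (yn : ι → Y) (zn : ι → Z) :
    q yn zn ≤ coordJoint q i (yn i) (zn i) :=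
  le_mapJoint _ _ hq yn zn

theorem sum_coordJoint_right (q : (ι → Y) → (ι → Z) → ℝ) (i : ι) (y : Y) :
    ∑ z, coordJoint q i y z = ∑ yn with yn i = y, ∑ zn, q yn zn :=
  sum_mapJoint_right _ _ q y

theorem sum_coordJoint_mul (q : (ι → Y) → (ι → Z) → ℝ) (i : ι) (h : Y → Z → ℝ) :
    ∑ y, ∑ z, coordJoint q i y z * h y z = ∑ yn, ∑ zn, q yn zn * h (yn i) (zn i) :=
  sum_mapJoint_mul _ _ q h

theorem sum_coordJoint_right_of_iid (hpY : ∑ y, pY y = 1)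
    (hrow : ∀ yn, ∑ zn, q yn zn = ∏ j, pY (yn j)) (i : ι) (y : Y) :
    ∑ z, coordJoint q i y z = pY y := by
  simp only [sum_coordJoint_right, hrow, sum_filter_apply_eq_mul_prod_erase, hpY, prod_const_one,
    mul_one]

/-- `q(zⁿ) ∏ᵢ q(yᵢ | zᵢ)`, a subprobability: `I(Yⁿ; Zⁿ) - ∑ᵢ I(Yᵢ; Zᵢ)` is the divergence of `q`
from it when the `Yᵢ` are independent. -/
noncomputable def coordwiseCond (q : (ι → Y) → (ι → Z) → ℝ) (yn : ι → Y) (zn : ι → Z) : ℝ :=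
  (∑ yn', q yn' zn) * ∏ i, coordJoint q i (yn i) (zn i) / ∑ y, coordJoint q i y (zn i)

theorem coordwiseCond_nonneg (hq : ∀ yn zn, 0 ≤ q yn zn) (yn : ι → Y) (zn : ι → Z) :
    0 ≤ coordwiseCond q yn zn :=
  mul_nonneg (sum_nonneg fun yn _ => hq yn zn) (prod_nonneg fun i _ =>
    div_nonneg (coordJoint_nonneg hq i _ _) (sum_nonneg fun y _ => coordJoint_nonneg hq i y _))

theorem coordwiseCond_pos (hq : ∀ yn zn, 0 ≤ q yn zn) {yn : ι → Y} {zn : ι → Z}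
    (h : 0 < q yn zn) : 0 < coordwiseCond q yn zn := by
  refine mul_pos (h.trans_le (single_le_sum (fun yn _ => hq yn zn) (mem_univ yn)))
    (prod_pos fun i _ => ?_)
  have hri := h.trans_le (le_coordJoint hq i yn zn)
  exact div_pos hri (hri.trans_le
    (single_le_sum (fun y _ => coordJoint_nonneg hq i y (zn i)) (mem_univ (yn i))))

theorem sum_sum_coordwiseCond_le (hq : ∀ yn zn, 0 ≤ q yn zn) :
    ∑ yn, ∑ zn, coordwiseCond q yn zn ≤ ∑ yn, ∑ zn, q yn zn := by
  rw [sum_comm, sum_comm (f := q)]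
  refine sum_le_sum fun zn _ => ?_
  simp only [coordwiseCond]
  rw [← mul_sum]
  have h1 := sum_prod_div_sum_le_one (f := fun i y => coordJoint q i y (zn i))
    fun i y => coordJoint_nonneg hq i y (zn i)
  exact mul_le_of_le_one_right (sum_nonneg fun yn _ => hq yn zn) h1

theorem MI_eq_sum_MI_coordJoint_add (hq : ∀ yn zn, 0 ≤ q yn zn) (hpY : ∑ y, pY y = 1)
    (hrow : ∀ yn, ∑ zn, q yn zn = ∏ j, pY (yn j)) :
    MI q = ∑ i, MI (coordJoint q i) +
      ∑ yn, ∑ zn, q yn zn * log (q yn zn / coordwiseCond q yn zn) := by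
  let L : ι → Y → Z → ℝ := fun i y z =>
    log (coordJoint q i y z / (pY y * ∑ y', coordJoint q i y' z))
  have hrow_i : ∀ i y, ∑ z, coordJoint q i y z = pY y := sum_coordJoint_right_of_iid hpY hrow
  have hMI_i : ∀ i, MI (coordJoint q i) = ∑ yn, ∑ zn, q yn zn * L i (yn i) (zn i) := fun i => by
    simp only [MI, hrow_i]
    exact sum_coordJoint_mul q i (L i)
  have hMIq : MI q = ∑ yn, ∑ zn,
      q yn zn * log (q yn zn / ((∏ j, pY (yn j)) * ∑ yn', q yn' zn)) := by
    simp only [MI, hrow]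
  have hpt : ∀ yn zn, q yn zn * log (q yn zn / ((∏ j, pY (yn j)) * ∑ yn', q yn' zn)) =
      ∑ i, q yn zn * L i (yn i) (zn i) +
        q yn zn * log (q yn zn / coordwiseCond q yn zn) := fun yn zn => by
    rcases (hq yn zn).eq_or_lt with h | h
    · simp [← h]
    have hr : ∀ i, 0 < coordJoint q i (yn i) (zn i) := fun i =>
      h.trans_le (le_coordJoint hq i yn zn)
    rw [← mul_sum, ← mul_add, log_div_prod_mul_eq univ h
      (h.trans_le (single_le_sum (fun yn _ => hq yn zn) (mem_univ yn)))
      (fun i _ => hrow_i i (yn i) ▸ (hr i).trans_le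
        (single_le_sum (fun z _ => coordJoint_nonneg hq i (yn i) z) (mem_univ (zn i))))
      (fun i _ => hr i) (fun i _ => (hr i).trans_le
        (single_le_sum (fun y _ => coordJoint_nonneg hq i y (zn i)) (mem_univ (yn i))))]
    rfl
  simp only [hMIq, hpt, sum_add_distrib, hMI_i]
  congr 1
  exact (sum_comm.trans (sum_congr rfl fun _ _ => sum_comm)).symm

theorem sum_MI_coordJoint_le_MI (hq : ∀ yn zn, 0 ≤ q yn zn) (hpY : ∑ y, pY y = 1)
    (hrow : ∀ yn, ∑ zn, q yn zn = ∏ j, pY (yn j)) :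
    ∑ i, MI (coordJoint q i) ≤ MI q := by
  have hq1 : ∑ yn, ∑ zn, q yn zn = 1 := by
    simp only [hrow, ← Fintype.prod_sum, hpY, prod_const_one]
  have hgibbs := sum_mul_log_div_nonneg univ (a := fun w : (ι → Y) × (ι → Z) => q w.1 w.2)
    (b := fun w => coordwiseCond q w.1 w.2) (fun w _ => hq w.1 w.2)
    (fun w _ => coordwiseCond_nonneg hq w.1 w.2) (fun w _ => coordwiseCond_pos hq)
    (by rwa [Fintype.sum_prod_type])
    (by rw [Fintype.sum_prod_type, ← hq1]; exact sum_sum_coordwiseCond_le hq)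
  rw [Fintype.sum_prod_type] at hgibbs
  linarith [MI_eq_sum_MI_coordJoint_add hq hpY hrow]

end Superadditivity

theorem isChannel_sum_mul {ι X Xh : Type*} [Fintype ι] [Fintype Xh] {w : ι → ℝ}
    (hw0 : ∀ i, 0 ≤ w i) (hw1 : ∑ i, w i = 1) {K : ι → X → Xh → ℝ} (hK : ∀ i, IsChannel (K i)) :
    IsChannel fun x z => ∑ i, w i * K i x z :=
  ⟨fun x z => sum_nonneg fun i _ => mul_nonneg (hw0 i) ((hK i).1 x z), fun x => by
    rw [sum_comm]; simp_rw [← mul_sum, (hK _).2, mul_one, hw1]⟩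

theorem singleYZ_sum_mul {ι X Y Xh : Type*} [Fintype ι] [Fintype X] (pxy : X → Y → ℝ)
    (w : ι → ℝ) (K : ι → X → Xh → ℝ) :
    singleYZ pxy (fun x z => ∑ i, w i * K i x z) =
      fun y z => ∑ i, w i * singleYZ pxy (K i) y z := by
  funext y z
  simp only [singleYZ, mul_sum]
  rw [sum_comm]
  exact sum_congr rfl fun i _ => sum_congr rfl fun x _ => mul_left_comm _ _ _

theorem singleCost_sum_mul {ι X Y Xh : Type*} [Fintype ι] [Fintype X] [Fintype Y] [Fintype Xh]
    (pxy : X → Y → ℝ) (w : ι → ℝ) (K : ι → X → Xh → ℝ) (c : X → Xh → ℝ) :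
    singleCost pxy (fun x z => ∑ i, w i * K i x z) c = ∑ i, w i * singleCost pxy (K i) c := by
  have hterm : ∀ x z, (∑ y, pxy x y) * (∑ i, w i * K i x z) * c x z =
      ∑ i, w i * ((∑ y, pxy x y) * K i x z * c x z) := fun x z => by
    rw [mul_sum, sum_mul]
    exact sum_congr rfl fun i _ => by ring
  simp only [singleCost, hterm]
  simp only [mul_sum]
  exact (sum_congr rfl fun _ _ => sum_comm).trans sum_comm

theorem singleCost_nonneg {X Y Xh : Type*} [Fintype X] [Fintype Y] [Fintype Xh]
    {pxy : X → Y → ℝ} (hpxy : ∀ x y, 0 ≤ pxy x y) {K : X → Xh → ℝ} (hK : IsChannel K)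
    {c : X → Xh → ℝ} (hc : ∀ x z, 0 ≤ c x z) : 0 ≤ singleCost pxy K c :=
  sum_nonneg fun x _ => sum_nonneg fun z _ =>
    mul_nonneg (mul_nonneg (sum_nonneg fun y _ => hpxy x y) (hK.1 x z)) (hc x z)

/-- The law of `X̂ᵢ` given `Xᵢ = x` when the other inputs are i.i.d. `pX`. Weighting by the other
coordinates only, instead of dividing the law of `(Xᵢ, X̂ᵢ)` by `pX x`, keeps it a channel at
inputs with `pX x = 0`. -/
noncomputable def coordChannel {ι X Xh : Type*} [Fintype ι] [DecidableEq ι] [Fintype X]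
    [DecidableEq X] [Fintype Xh] [DecidableEq Xh] (pX : X → ℝ) (W : (ι → X) → (ι → Xh) → ℝ)
    (i : ι) : X → Xh → ℝ :=
  coordJoint (fun xn zn => (∏ j ∈ univ.erase i, pX (xn j)) * W xn zn) i

section coordChannel

variable {ι X Xh : Type*} [Fintype ι] [DecidableEq ι] [Fintype X] [DecidableEq X] [Fintype Xh]
  [DecidableEq Xh] {pX : X → ℝ} {W : (ι → X) → (ι → Xh) → ℝ}

theorem isChannel_coordChannel (hpX0 : ∀ x, 0 ≤ pX x) (hpX1 : ∑ x, pX x = 1) (hW : IsChannel W)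
    (i : ι) : IsChannel (coordChannel pX W i) := by
  refine ⟨coordJoint_nonneg (fun xn zn =>
    mul_nonneg (prod_nonneg fun _ _ => hpX0 _) (hW.1 xn zn)) i, fun x => ?_⟩
  simp only [coordChannel, sum_coordJoint_right, ← mul_sum, hW.2, mul_one,
    sum_filter_apply_eq_prod_erase (fun _ => pX), hpX1, prod_const_one]

theorem singleCost_coordChannel {Y : Type*} [Fintype Y] {pxy : X → Y → ℝ}
    (hpX : ∀ x, ∑ y, pxy x y = pX x) (c : X → Xh → ℝ) (i : ι) :
    singleCost pxy (coordChannel pX W i) c =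
      ∑ xn, ∑ zn, (∏ j, pX (xn j)) * W xn zn * c (xn i) (zn i) := by
  simp only [singleCost, hpX]
  calc _ = ∑ x, ∑ z, coordChannel pX W i x z * (pX x * c x z) :=
        sum_congr rfl fun x _ => sum_congr rfl fun z _ => by ring
    _ = _ := sum_coordJoint_mul _ i _
    _ = _ := sum_congr rfl fun xn _ => sum_congr rfl fun zn _ => by
        rw [← mul_prod_erase univ _ (mem_univ i)]; ring

end coordChannel

section iidJoint

variable {X Y Xh : Type*} [Fintype X] [Fintype Xh] {n : ℕ} {pxy : X → Y → ℝ}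
  {W : (Fin n → X) → (Fin n → Xh) → ℝ}

theorem sum_iidJoint_nonneg (hpxy : ∀ x y, 0 ≤ pxy x y) (hW : IsChannel W) (yn : Fin n → Y)
    (zn : Fin n → Xh) : 0 ≤ ∑ xn, iidJoint n pxy W yn xn zn :=
  sum_nonneg fun xn _ => mul_nonneg (prod_nonneg fun _ _ => hpxy _ _) (hW.1 xn zn)

theorem sum_sum_iidJoint (hW : IsChannel W) (yn : Fin n → Y) :
    ∑ zn, ∑ xn, iidJoint n pxy W yn xn zn = ∏ j, ∑ x, pxy x (yn j) := by
  rw [sum_comm, Fintype.prod_sum fun j x => pxy x (yn j)]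
  simp only [iidJoint, ← mul_sum, hW.2, mul_one]

variable [DecidableEq X] [Fintype Y] [DecidableEq Y] [DecidableEq Xh]

theorem singleYZ_coordChannel {pX : X → ℝ} (hpX : ∀ x, ∑ y, pxy x y = pX x) (i : Fin n) :
    singleYZ pxy (coordChannel pX W i) =
      coordJoint (fun yn zn => ∑ xn, iidJoint n pxy W yn xn zn) i := by
  funext y z
  have hfiber : ∀ xn : Fin n → X, ∑ yn : Fin n → Y with yn i = y, ∏ j, pxy (xn j) (yn j) =
      pxy (xn i) y * ∏ j ∈ univ.erase i, pX (xn j) := fun xn => by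
    simp only [sum_filter_apply_eq_mul_prod_erase (fun j b => pxy (xn j) b), hpX]
  simp only [singleYZ, coordChannel, coordJoint, mapJoint, iidJoint, mul_sum]
  rw [sum_fiberwise_eq_sum_comp univ (· i) fun x xn => ∑ zn with zn i = z,
    pxy x y * ((∏ j ∈ univ.erase i, pX (xn j)) * W xn zn)]
  simp only [← mul_assoc, ← hfiber, sum_mul]
  exact (sum_congr rfl fun _ _ => sum_comm).trans
    (sum_comm.trans (sum_congr rfl fun _ _ => sum_comm))

end iidJoint

theorem costn_eq_sum {X Y Xh : Type*} [Fintype X] [Fintype Y] [Fintype Xh] (n : ℕ)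
    (pxy : X → Y → ℝ) (W : (Fin n → X) → (Fin n → Xh) → ℝ) (c : X → Xh → ℝ) :
    costn n pxy W c = ∑ i, (n : ℝ)⁻¹ *
      ∑ xn, ∑ zn, (∏ j, ∑ y, pxy (xn j) y) * W xn zn * c (xn i) (zn i) := by
  have hterm : ∀ (xn : Fin n → X) zn, (∏ j, ∑ y, pxy (xn j) y) * W xn zn *
      ((1 / (n : ℝ)) * ∑ i, c (xn i) (zn i)) =
      ∑ i, (n : ℝ)⁻¹ * ((∏ j, ∑ y, pxy (xn j) y) * W xn zn * c (xn i) (zn i)) := fun xn zn => by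
    rw [mul_sum, mul_sum]
    exact sum_congr rfl fun i _ => by ring
  simp only [costn, hterm]
  simp only [mul_sum]
  exact (sum_congr rfl fun _ _ => sum_comm).trans sum_comm

/-- Converse part of the non-asymptotic minimum average erasure cost. -/
theorem stmt2 {X Y Xh : Type*} [Fintype X] [Fintype Y] [Fintype Xh] (n : ℕ) (hn : 0 < n)
    (pxy : X → Y → ℝ) (hpxy : IsPMF2 pxy)
    (W : (Fin n → X) → (Fin n → Xh) → ℝ) (hW : IsChannel W)
    (c : X → Xh → ℝ) (hc : ∀ x z, 0 ≤ c x z) (ε Γ : ℝ)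
    (hMI : MI (fun yn zn => ∑ xn, iidJoint n pxy W yn xn zn) ≤ ε)
    (hcost : costn n pxy W c ≤ Γ) :
    sInf {v | ∃ K : X → Xh → ℝ, IsChannel K ∧ MI (singleYZ pxy K) ≤ ε / n ∧
        v = singleCost pxy K c} ≤ Γ := by
  classical
  have hw0 : ∀ _ : Fin n, (0 : ℝ) ≤ (n : ℝ)⁻¹ := fun _ => by positivity
  have hw1 : ∑ _ : Fin n, (n : ℝ)⁻¹ = 1 := by simp [hn.ne']
  have hpY1 : ∑ y, ∑ x, pxy x y = 1 := sum_comm.trans hpxy.2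
  let K : X → Xh → ℝ := fun x z => ∑ i, (n : ℝ)⁻¹ * coordChannel (fun x => ∑ y, pxy x y) W i x z
  have hK : IsChannel K := isChannel_sum_mul hw0 hw1 fun i =>
    isChannel_coordChannel (fun x => sum_nonneg fun y _ => hpxy.1 x y) hpxy.2 hW i
  have hMIK : MI (singleYZ pxy K) ≤ ε / n := by
    have hq := sum_iidJoint_nonneg hpxy.1 hW
    have hrow := sum_sum_iidJoint (pxy := pxy) hW
    rw [singleYZ_sum_mul]
    simp only [singleYZ_coordChannel fun _ => rfl]
    calc _ ≤ ∑ i, (n : ℝ)⁻¹ * MI (coordJoint (fun yn zn => ∑ xn, iidJoint n pxy W yn xn zn) i) :=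
          MI_sum_mul_le hw0 hw1 (coordJoint_nonneg hq) (sum_coordJoint_right_of_iid hpY1 hrow)
      _ ≤ (n : ℝ)⁻¹ * ε := by
          rw [← mul_sum]
          exact mul_le_mul_of_nonneg_left
            ((sum_MI_coordJoint_le_MI hq hpY1 hrow).trans hMI) (by positivity)
      _ = ε / n := inv_mul_eq_div _ _
  have hcostK : singleCost pxy K c = costn n pxy W c := by
    rw [singleCost_sum_mul, costn_eq_sum]
    simp only [singleCost_coordChannel fun _ => rfl]
  exact csInf_le_of_le ⟨0, fun v ⟨K', hK', _, hv⟩ => hv ▸ singleCost_nonneg hpxy.1 hK' hc⟩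
    ⟨K, hK, hMIK, rfl⟩ (hcostK ▸ hcost)
end

section
/- (Optimality of constant overwriting under non-weak-independence.) Suppose the rows {P_{Y|X}(·|x) : x ∈ 𝒳} of the channel from X to Y are linearly independent. Then for any RV X̂ with Y − X − X̂ and I(Y; X̂) = 0, it holds that I(X; X̂) = 0, and consequently min over such X̂ of E[c(X, X̂)] equals Γ_min = min_{x̂ ∈ X̂} E[c(X, x̂)]. -/
open scoped BigOperators

-- pointwise inequality
lemma term_ge {p m : ℝ} (hp : 0 ≤ p) (hm : 0 ≤ m)
    (hpm : p ≠ 0 → 0 < m) : p - m ≤ p * Real.log (p / m) := by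
  rcases eq_or_ne p 0 with h | h
  · simp [h, hm]
  · have hp' : 0 < p := lt_of_le_of_ne hp (Ne.symm h)
    have hm' : 0 < m := hpm h
    have h1 : Real.log (m / p) ≤ m / p - 1 := Real.log_le_sub_one_of_pos (by positivity)
    have h2 : Real.log (m / p) = - Real.log (p / m) := by
      rw [Real.log_div hm'.ne' hp'.ne', Real.log_div hp'.ne' hm'.ne']; ring
    rw [h2] at h1
    have := mul_le_mul_of_nonneg_left h1 hp
    have hmp : p * (m / p) = m := by field_simp
    nlinarith [this]

lemma term_eq {p m : ℝ} (hp : 0 ≤ p) (hm : 0 ≤ m)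
    (hpm : p ≠ 0 → 0 < m) (heq : p - m = p * Real.log (p / m)) : p = m := by
  rcases eq_or_ne p 0 with h | h
  · simp [h] at heq ⊢; linarith [heq]
  · have hp' : 0 < p := lt_of_le_of_ne hp (Ne.symm h)
    have hm' : 0 < m := hpm h
    by_contra hne
    have hx : p / m ≠ 1 := by
      intro h1; exact hne (by field_simp at h1; linarith)
    have h1 : Real.log (m / p) < m / p - 1 := by
      apply Real.log_lt_sub_one_of_pos (by positivity)
      intro h1; apply hx; field_simp at h1 ⊢; linarith
    have h2 : Real.log (m / p) = - Real.log (p / m) := by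
      rw [Real.log_div hm'.ne' hp'.ne', Real.log_div hp'.ne' hm'.ne']; ring
    rw [h2] at h1
    have := mul_lt_mul_of_pos_left h1 hp'
    have hmp : p * (m / p) = m := by field_simp
    nlinarith [this]

/-- MI = 0 implies product form. -/
lemma mi_zero_prod {α β : Type*} [Fintype α] [Fintype β] (p : α → β → ℝ)
    (hp : ∀ a b, 0 ≤ p a b) (hsum : ∑ a, ∑ b, p a b = 1) (h : MI p = 0) :
    ∀ a b, p a b = (∑ b', p a b') * (∑ a', p a' b) := by
  set m : α → β → ℝ := fun a b => (∑ b', p a b') * (∑ a', p a' b) with hm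
  have hmnn : ∀ a b, 0 ≤ m a b := fun a b =>
    mul_nonneg (Finset.sum_nonneg fun _ _ => hp _ _) (Finset.sum_nonneg fun _ _ => hp _ _)
  have hmpos : ∀ a b, p a b ≠ 0 → 0 < m a b := by
    intro a b hne
    have hpb : 0 < p a b := lt_of_le_of_ne (hp a b) (Ne.symm hne)
    have h1 : p a b ≤ ∑ b', p a b' := Finset.single_le_sum (fun i _ => hp a i) (Finset.mem_univ b)
    have h2 : p a b ≤ ∑ a', p a' b := Finset.single_le_sum (fun i _ => hp i b) (Finset.mem_univ a)
    exact mul_pos (lt_of_lt_of_le hpb h1) (lt_of_lt_of_le hpb h2)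
  have hmsum : ∑ a, ∑ b, m a b = 1 := by
    have hc : ∑ b, ∑ a', p a' b = 1 := by rw [Finset.sum_comm]; exact hsum
    calc ∑ a, ∑ b, m a b = ∑ a, (∑ b', p a b') * (∑ b, ∑ a', p a' b) := by
          simp only [hm, Finset.mul_sum]
      _ = 1 := by rw [hc]; simp [hsum]
  -- termwise
  have hterm : ∀ a b, p a b - m a b ≤ p a b * Real.log (p a b / m a b) :=
    fun a b => term_ge (hp a b) (hmnn a b) (hmpos a b)
  have hdiffsum : ∑ a, ∑ b, (p a b * Real.log (p a b / m a b) - (p a b - m a b)) = 0 := by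
    simp only [Finset.sum_sub_distrib]
    have : ∑ a, ∑ b, p a b * Real.log (p a b / m a b) = 0 := h
    rw [this, hsum, hmsum]; ring
  have hzero : ∀ a ∈ Finset.univ, ∀ b ∈ Finset.univ,
      p a b * Real.log (p a b / m a b) - (p a b - m a b) = 0 := by
    have := (Finset.sum_eq_zero_iff_of_nonneg (fun a _ =>
      Finset.sum_nonneg fun b _ => sub_nonneg.mpr (hterm a b))).mp hdiffsum
    intro a ha b hb
    exact (Finset.sum_eq_zero_iff_of_nonneg (fun b _ => sub_nonneg.mpr (hterm a b))).mp
      (this a ha) b hb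
  intro a b
  have := hzero a (Finset.mem_univ a) b (Finset.mem_univ b)
  show p a b = m a b
  exact term_eq (hp a b) (hmnn a b) (hmpos a b) (by linarith)

lemma MI_prod_zero {α β : Type*} [Fintype α] [Fintype β] (f : α → ℝ) (g : β → ℝ)
    (hf : ∑ a, f a = 1) (hg : ∑ b, g b = 1) : MI (fun a b => f a * g b) = 0 := by
  unfold MI
  apply Finset.sum_eq_zero; intro a _
  apply Finset.sum_eq_zero; intro b _
  have h1 : ∑ b', f a * g b' = f a := by rw [← Finset.mul_sum, hg, mul_one]
  have h2 : ∑ a', f a' * g b = g b := by rw [← Finset.sum_mul, hf, one_mul]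
  rw [h1, h2]
  rcases eq_or_ne (f a * g b) 0 with h | h
  · simp [h]
  · rw [div_self h, Real.log_one, mul_zero]


/-- If the rows of `P_{Y|X}` are linearly independent (`Y` is not weakly
independent of `X`), then every `X̂` with `Y − X − X̂` and `I(Y;X̂) = 0`
satisfies `I(X;X̂) = 0`, and consequently the minimum cost at zero leakage
equals `Γ_min = min_{x̂} E[c(X,x̂)]`. -/
theorem stmt6 {X Y Xh : Type*} [Fintype X] [Fintype Y] [Fintype Xh] [Nonempty Xh]
    (hcard : 2 ≤ Fintype.card Xh)
    (pX : X → ℝ) (hpX : (∀ x, 0 < pX x) ∧ ∑ x, pX x = 1)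
    (chan : X → Y → ℝ) (hchan : IsChannel chan)
    (hli : LinearIndependent ℝ (fun x : X => (chan x : Y → ℝ)))
    (c : X → Xh → ℝ) (hc : ∀ x z, 0 ≤ c x z) :
    (∀ K : X → Xh → ℝ, IsChannel K →
        MI (fun y z => ∑ x, pX x * chan x y * K x z) = 0 →
        MI (fun x z => pX x * K x z) = 0) ∧
    sInf {v | ∃ K : X → Xh → ℝ, IsChannel K ∧
        MI (fun y z => ∑ x, pX x * chan x y * K x z) = 0 ∧
        v = ∑ x, ∑ z, pX x * K x z * c x z}
      = ⨅ z : Xh, ∑ x, pX x * c x z := by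
  obtain ⟨hpXpos, hpXsum⟩ := hpX
  obtain ⟨hchan0, hchan1⟩ := hchan
  -- Key: every admissible K is constant in x
  have key : ∀ K : X → Xh → ℝ, IsChannel K →
      MI (fun y z => ∑ x, pX x * chan x y * K x z) = 0 →
      ∀ x z, K x z = ∑ x', pX x' * K x' z := by
    intro K hK hMI x z
    obtain ⟨hK0, hK1⟩ := hK
    set q : Y → Xh → ℝ := fun y z => ∑ x, pX x * chan x y * K x z with hq
    have hqnn : ∀ y z, 0 ≤ q y z := fun y z =>
      Finset.sum_nonneg fun x _ =>
        mul_nonneg (mul_nonneg (hpXpos x).le (hchan0 x y)) (hK0 x z)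
    have hrow : ∀ y, ∑ z', q y z' = ∑ x', pX x' * chan x' y := by
      intro y
      rw [Finset.sum_comm]
      apply Finset.sum_congr rfl; intro x _
      rw [← Finset.mul_sum, hK1, mul_one]
    have hcol : ∀ z', ∑ y, q y z' = ∑ x', pX x' * K x' z' := by
      intro z'
      rw [Finset.sum_comm]
      apply Finset.sum_congr rfl; intro x _
      calc ∑ y, pX x * chan x y * K x z' = (pX x * K x z') * ∑ y, chan x y := by
            rw [Finset.mul_sum]; apply Finset.sum_congr rfl; intro y _; ring
        _ = pX x * K x z' := by rw [hchan1, mul_one]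
    have hqsum : ∑ y, ∑ z', q y z' = 1 := by
      have : ∑ y, ∑ z', q y z' = ∑ y, ∑ x', pX x' * chan x' y := by
        exact Finset.sum_congr rfl fun y _ => hrow y
      rw [this, Finset.sum_comm]
      calc ∑ x', ∑ y, pX x' * chan x' y = ∑ x', pX x' := by
            apply Finset.sum_congr rfl; intro x' _
            rw [← Finset.mul_sum, hchan1, mul_one]
        _ = 1 := hpXsum
    have hprod := mi_zero_prod q hqnn hqsum hMI
    -- linear independence step
    have hlin := Fintype.linearIndependent_iff.mp hli
      (fun x' => pX x' * K x' z - pX x' * (∑ x'', pX x'' * K x'' z)) ?_ x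
    · have hx := hpXpos x
      have : pX x * K x z = pX x * (∑ x'', pX x'' * K x'' z) := by linarith [hlin]
      exact mul_left_cancel₀ hx.ne' this
    · funext y
      have h1 := hprod y z
      rw [hrow y, hcol z] at h1
      have h2 : (∑ x', (pX x' * K x' z - pX x' * ∑ x'', pX x'' * K x'' z) • chan x') y
          = ∑ x', (pX x' * K x' z - pX x' * ∑ x'', pX x'' * K x'' z) * chan x' y := by
        rw [Finset.sum_apply]; rfl
      rw [h2]
      have h3 : ∑ x', (pX x' * K x' z - pX x' * ∑ x'', pX x'' * K x'' z) * chan x' y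
          = q y z - (∑ x', pX x' * chan x' y) * (∑ x', pX x' * K x' z) := by
        rw [hq]
        simp only [sub_mul, Finset.sum_sub_distrib, Finset.sum_mul]
        congr 1
        · apply Finset.sum_congr rfl; intro x' _; ring
        · apply Finset.sum_congr rfl; intro x' _; ring
      rw [h3, h1]
      simp
  constructor
  · intro K hK hMI
    have hKconst := key K hK hMI
    obtain ⟨hK0, hK1⟩ := hK
    set qZ : Xh → ℝ := fun z => ∑ x', pX x' * K x' z with hqZ
    have hqZsum : ∑ z, qZ z = 1 := by
      rw [hqZ]
      simp only
      rw [Finset.sum_comm]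
      calc ∑ x', ∑ z, pX x' * K x' z = ∑ x', pX x' := by
            apply Finset.sum_congr rfl; intro x' _
            rw [← Finset.mul_sum, hK1, mul_one]
        _ = 1 := hpXsum
    have : (fun x z => pX x * K x z) = fun x z => pX x * qZ z := by
      funext x z; rw [hKconst x z]
    rw [this]
    exact MI_prod_zero pX qZ hpXsum hqZsum
  · -- the sInf computation
    set F : Xh → ℝ := fun z => ∑ x, pX x * c x z with hF
    obtain ⟨z0, hz0⟩ := Finite.exists_min F
    have hFnn : ∀ z, 0 ≤ F z := fun z =>
      Finset.sum_nonneg fun x _ => mul_nonneg (hpXpos x).le (hc x z)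
    have hinf : ⨅ z : Xh, F z = F z0 := by
      apply le_antisymm
      · exact ciInf_le (Set.Finite.bddBelow (Set.finite_range F)) z0
      · exact le_ciInf hz0
    -- membership of constant channels
    have hmem : ∀ z1 : Xh, F z1 ∈ {v | ∃ K : X → Xh → ℝ, IsChannel K ∧
        MI (fun y z => ∑ x, pX x * chan x y * K x z) = 0 ∧
        v = ∑ x, ∑ z, pX x * K x z * c x z} := by
      intro z1
      classical
      refine ⟨fun _ z => if z = z1 then 1 else 0, ⟨?_, ?_⟩, ?_, ?_⟩
      · intro a b; dsimp only; split <;> norm_num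
      · intro a; simp
      · have : (fun y z => ∑ x, pX x * chan x y * (if z = z1 then (1:ℝ) else 0))
            = fun y z => (∑ x, pX x * chan x y) * (if z = z1 then (1:ℝ) else 0) := by
          funext y z
          rw [Finset.sum_mul]
        rw [this]
        apply MI_prod_zero
        · rw [Finset.sum_comm]
          calc ∑ x, ∑ y, pX x * chan x y = ∑ x, pX x := by
                apply Finset.sum_congr rfl; intro x _
                rw [← Finset.mul_sum, hchan1, mul_one]
            _ = 1 := hpXsum
        · simp
      · rw [hF]
        apply Finset.sum_congr rfl; intro x _
        simp [mul_ite]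
    apply le_antisymm
    · rw [hinf]
      exact csInf_le ⟨0, fun v ⟨K, ⟨hK0, hK1⟩, _, hv⟩ => hv ▸
        Finset.sum_nonneg fun x _ => Finset.sum_nonneg fun z _ =>
          mul_nonneg (mul_nonneg (hpXpos x).le (hK0 x z)) (hc x z)⟩ (hmem z0)
    · rw [hinf]
      apply le_csInf ⟨F z0, hmem z0⟩
      rintro v ⟨K, hK, hMI, rfl⟩
      have hKconst := key K hK hMI
      obtain ⟨hK0, hK1⟩ := hK
      set qZ : Xh → ℝ := fun z => ∑ x', pX x' * K x' z with hqZ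
      have hqZnn : ∀ z, 0 ≤ qZ z := fun z =>
        Finset.sum_nonneg fun x _ => mul_nonneg (hpXpos x).le (hK0 x z)
      have hqZsum : ∑ z, qZ z = 1 := by
        rw [hqZ]
        simp only
        rw [Finset.sum_comm]
        calc ∑ x', ∑ z, pX x' * K x' z = ∑ x', pX x' := by
              apply Finset.sum_congr rfl; intro x' _
              rw [← Finset.mul_sum, hK1, mul_one]
          _ = 1 := hpXsum
      calc F z0 = ∑ z, qZ z * F z0 := by rw [← Finset.sum_mul, hqZsum, one_mul]
        _ ≤ ∑ z, qZ z * F z := Finset.sum_le_sum fun z _ =>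
            mul_le_mul_of_nonneg_left (hz0 z) (hqZnn z)
        _ = ∑ x, ∑ z, pX x * K x z * c x z := by
            rw [Finset.sum_comm (s := Finset.univ) (t := Finset.univ)
              (f := fun x z => pX x * K x z * c x z)]
            apply Finset.sum_congr rfl; intro z _
            calc qZ z * F z = ∑ x, pX x * K x z * c x z := by
                  rw [hF]
                  simp only [Finset.mul_sum]
                  apply Finset.sum_congr rfl; intro x _
                  rw [hKconst x z]; ring
              _ = _ := rfl
end

section
/- (Berger–Yeung characterization, one direction.) If there exists an RV X̂ such that Y − X − X̂ is a Markov chain, Y and X̂ are independent, and X and X̂ are NOT independent, then the rows P_{Y|X}(·|x), x ∈ 𝒳, are linearly dependent (Y is weakly independent of X). -/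
open scoped BigOperators

/-- Berger–Yeung, one direction: if some `X̂` satisfies `Y − X − X̂`,
`Y ⟂ X̂`, and `X` not independent of `X̂`, then the rows of `P_{Y|X}` are
linearly dependent (`Y` is weakly independent of `X`). -/
theorem stmt7 {X Y Xh : Type*} [Fintype X] [Fintype Y] [Fintype Xh]
    (hcard : 2 ≤ Fintype.card Xh)
    (pX : X → ℝ) (hpX : (∀ x, 0 < pX x) ∧ ∑ x, pX x = 1)
    (chan : X → Y → ℝ) (hchan : IsChannel chan)
    (K : X → Xh → ℝ) (hK : IsChannel K)
    (hYind : ∀ y z, (∑ x, pX x * chan x y * K x z)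
        = (∑ x, pX x * chan x y) * (∑ x, pX x * K x z))
    (hXdep : ¬ ∀ x z, pX x * K x z = pX x * (∑ x', pX x' * K x' z)) :
    ¬ LinearIndependent ℝ (fun x : X => (chan x : Y → ℝ)) := by
  intro hli
  apply hXdep
  intro x z
  have key := Fintype.linearIndependent_iff.mp hli
    (fun x => pX x * K x z - pX x * (∑ x', pX x' * K x' z)) ?_ x
  · linarith [key]
  · funext y
    simp only [Finset.sum_apply, Pi.smul_apply, smul_eq_mul, Pi.zero_apply, sub_mul]
    rw [Finset.sum_sub_distrib]
    have h1 : ∑ x, pX x * K x z * chan x y = ∑ x, pX x * chan x y * K x z := by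
      apply Finset.sum_congr rfl; intro x _; ring
    have h2 : ∑ x, pX x * (∑ x', pX x' * K x' z) * chan x y
        = (∑ x, pX x * chan x y) * (∑ x', pX x' * K x' z) := by
      rw [Finset.sum_mul]
      apply Finset.sum_congr rfl; intro x _; ring
    rw [h1, h2, hYind y z]
    ring
end

section
/- (Berger–Yeung characterization, other direction.) If the rows P_{Y|X}(·|x), x ∈ 𝒳, are linearly dependent, then there exists an RV X̂ on X̂ (with |X̂| ≥ 2) such that Y − X − X̂ is a Markov chain, Y and X̂ are independent, but X and X̂ are not independent. -/
open scoped BigOperators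

/-- Berger–Yeung, other direction: if the rows of `P_{Y|X}` are linearly
dependent, then there is a channel `P_{X̂|X}` (with `|X̂| ≥ 2`) such that
`Y − X − X̂`, `Y ⟂ X̂`, but `X` and `X̂` are not independent. -/
theorem stmt8 {X Y Xh : Type*} [Fintype X] [Fintype Y] [Fintype Xh]
    (hcard : 2 ≤ Fintype.card Xh)
    (pX : X → ℝ) (hpX : (∀ x, 0 < pX x) ∧ ∑ x, pX x = 1)
    (chan : X → Y → ℝ) (hchan : IsChannel chan)
    (hdep : ¬ LinearIndependent ℝ (fun x : X => (chan x : Y → ℝ))) :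
    ∃ K : X → Xh → ℝ, IsChannel K ∧
      (∀ y z, (∑ x, pX x * chan x y * K x z)
          = (∑ x, pX x * chan x y) * (∑ x, pX x * K x z)) ∧
      ¬ ∀ x z, pX x * K x z = pX x * (∑ x', pX x' * K x' z) := by
  classical
  obtain ⟨hpos, hsum⟩ := hpX
  obtain ⟨hCnn, hCsum⟩ := hchan
  have h1card : 1 < Fintype.card Xh := by omega
  obtain ⟨z0, z1, hz⟩ := Fintype.one_lt_card_iff.mp h1card
  rw [Fintype.not_linearIndependent_iff] at hdep
  obtain ⟨g, hg, x0, hx0⟩ := hdep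
  set d : X → ℝ := fun x => g x / pX x with hd
  have hgd : ∀ x, pX x * d x = g x := fun x => by
    simp only [hd]; rw [mul_comm, div_mul_cancel₀ _ (hpos x).ne']
  set S : ℝ := ∑ x, |d x| with hS
  have hS0 : 0 ≤ S := Finset.sum_nonneg fun x _ => abs_nonneg _
  set ε : ℝ := 1 / (2 * (S + 1)) with hε
  have hε0 : 0 < ε := by positivity
  have hεd : ∀ x, ε * |d x| ≤ 1/2 := by
    intro x
    have h1 : |d x| ≤ S :=
      Finset.single_le_sum (f := fun x => |d x|) (fun i _ => abs_nonneg _) (Finset.mem_univ x)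
    rw [hε, div_mul_eq_mul_div, one_mul, div_le_div_iff₀ (by positivity) (by norm_num)]
    nlinarith
  have hεd' : ∀ x, |ε * d x| ≤ 1/2 := fun x => by
    rw [abs_mul, abs_of_pos hε0]; exact hεd x
  -- rows sum to 0
  have hrow : ∀ y, ∑ x, g x * chan x y = 0 := by
    intro y
    have := congrFun hg y
    simpa [Finset.sum_apply] using this
  have hrow2 : ∀ y, ∑ x, pX x * d x * chan x y = 0 := by
    intro y
    rw [← hrow y]
    exact Finset.sum_congr rfl fun x _ => by rw [hgd]
  have hsumd : ∑ x, pX x * d x = 0 := by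
    have h1 : ∑ x, pX x * d x = ∑ x, ∑ y, g x * chan x y := by
      refine Finset.sum_congr rfl fun x _ => ?_
      rw [hgd, ← Finset.mul_sum, hCsum, mul_one]
    rw [h1, Finset.sum_comm]
    simp [hrow]
  refine ⟨fun x z => if z = z0 then 1/2 + ε * d x else if z = z1 then 1/2 - ε * d x else 0,
    ⟨?_, ?_⟩, ?_, ?_⟩
  · intro x z
    have h1 := abs_le.mp (hεd' x)
    dsimp only
    split_ifs <;> [skip; skip; rfl] <;> linarith [h1.1, h1.2]
  · intro x
    have hpt : ∀ z : Xh, (if z = z0 then 1/2 + ε * d x else if z = z1 then 1/2 - ε * d x else 0)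
        = (if z = z0 then 1/2 + ε * d x else 0) + (if z = z1 then 1/2 - ε * d x else 0) := by
      intro z
      by_cases h1 : z = z0
      · have h2 : z ≠ z1 := h1 ▸ hz
        simp [h1, h2, hz]
      · by_cases h2 : z = z1 <;> simp [h1, h2, Ne.symm hz]
    dsimp only
    simp_rw [hpt]
    rw [Finset.sum_add_distrib, Finset.sum_ite_eq' Finset.univ z0,
      Finset.sum_ite_eq' Finset.univ z1]
    simp; ring
  · intro y z
    dsimp only
    by_cases h0 : z = z0
    · have hpt : ∀ x : X, (if z = z0 then 1/2 + ε * d x else if z = z1 then 1/2 - ε * d x else 0)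
          = 1/2 + ε * d x := fun x => if_pos h0
      simp_rw [hpt]
      have hL : ∑ x, pX x * chan x y * (1/2 + ε * d x)
          = 1/2 * ∑ x, pX x * chan x y + ε * ∑ x, pX x * d x * chan x y := by
        rw [Finset.mul_sum, Finset.mul_sum, ← Finset.sum_add_distrib]
        exact Finset.sum_congr rfl fun x _ => by ring
      have hR : ∑ x, pX x * (1/2 + ε * d x)
          = 1/2 * ∑ x, pX x + ε * ∑ x, pX x * d x := by
        rw [Finset.mul_sum, Finset.mul_sum, ← Finset.sum_add_distrib]
        exact Finset.sum_congr rfl fun x _ => by ring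
      rw [hL, hR, hrow2, hsumd, hsum]; ring
    · by_cases h1 : z = z1
      · have hpt : ∀ x : X, (if z = z0 then 1/2 + ε * d x else if z = z1 then 1/2 - ε * d x else 0)
            = 1/2 - ε * d x := fun x => by rw [if_neg h0, if_pos h1]
        simp_rw [hpt]
        have hL : ∑ x, pX x * chan x y * (1/2 - ε * d x)
            = 1/2 * ∑ x, pX x * chan x y - ε * ∑ x, pX x * d x * chan x y := by
          rw [Finset.mul_sum, Finset.mul_sum, ← Finset.sum_sub_distrib]
          exact Finset.sum_congr rfl fun x _ => by ring
        have hR : ∑ x, pX x * (1/2 - ε * d x)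
            = 1/2 * ∑ x, pX x - ε * ∑ x, pX x * d x := by
          rw [Finset.mul_sum, Finset.mul_sum, ← Finset.sum_sub_distrib]
          exact Finset.sum_congr rfl fun x _ => by ring
        rw [hL, hR, hrow2, hsumd, hsum]; ring
      · simp [h0, h1]
  · intro h
    have h2 := h x0 z0
    simp only [if_pos rfl, eq_self_iff_true, if_true] at h2
    have hB : ∑ x', pX x' * (1/2 + ε * d x') = 1/2 := by
      have : ∑ x', pX x' * (1/2 + ε * d x')
          = 1/2 * ∑ x', pX x' + ε * ∑ x', pX x' * d x' := by
        rw [Finset.mul_sum, Finset.mul_sum, ← Finset.sum_add_distrib]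
        exact Finset.sum_congr rfl fun x _ => by ring
      rw [this, hsumd, hsum]; ring
    rw [hB] at h2
    have hpne : pX x0 ≠ 0 := ne_of_gt (hpos x0)
    have h3 : (1:ℝ)/2 + ε * d x0 = 1/2 := mul_left_cancel₀ hpne h2
    have h4 : ε * d x0 = 0 := by linarith
    have h5 : d x0 = 0 := by
      rcases mul_eq_zero.mp h4 with h | h
      · exact absurd h (ne_of_gt hε0)
      · exact h
    simp only [hd] at h5
    exact hx0 (by rwa [div_eq_zero_iff, or_iff_left (hpos x0).ne'] at h5)
end

section
/- (Binary-source counterpart.) If 𝒳 = {0,1} and X, Y are not independent, then any RV X̂ with Y − X − X̂ and I(Y; X̂) = 0 satisfies I(X; X̂) = 0. Equivalently, for binary X, Y is weakly independent of X if and only if Y and X are independent. -/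
open scoped BigOperators

private lemma gibbs1 {ι : Type*} [Fintype ι] (p q : ι → ℝ)
    (hp : ∀ i, 0 ≤ p i) (hq : ∀ i, 0 ≤ q i) (h0 : ∀ i, q i = 0 → p i = 0)
    (hsum : ∑ i, p i = ∑ i, q i)
    (hMI : ∑ i, p i * Real.log (p i / q i) = 0) : ∀ i, p i = q i := by
  have key : ∀ i, p i - q i ≤ p i * Real.log (p i / q i) ∧
      (p i * Real.log (p i / q i) = p i - q i → p i = q i) := by
    intro i
    rcases eq_or_lt_of_le (hp i) with h | h
    · refine ⟨?_, ?_⟩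
      · rw [← h]; simp; exact hq i
      · intro he; rw [← h] at he ⊢; simp at he; linarith [he]
    · have hqpos : 0 < q i := lt_of_le_of_ne (hq i) (fun h' => by
        have := h0 i h'.symm; linarith)
      have hdiv : 0 < q i / p i := div_pos hqpos h
      have hlogeq : Real.log (p i / q i) = - Real.log (q i / p i) := by
        rw [← Real.log_inv]; congr 1; field_simp
      constructor
      · have hlog := Real.log_le_sub_one_of_pos hdiv
        have : p i * Real.log (q i / p i) ≤ p i * (q i / p i - 1) :=
          mul_le_mul_of_nonneg_left hlog h.le
        rw [hlogeq]
        have hpq : p i * (q i / p i - 1) = q i - p i := by field_simp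
        nlinarith
      · intro he
        by_contra hne
        have hne1 : q i / p i ≠ 1 := by
          intro h1
          apply hne
          field_simp at h1
          linarith
        have hlog := Real.log_lt_sub_one_of_pos hdiv hne1
        have : p i * Real.log (q i / p i) < p i * (q i / p i - 1) :=
          mul_lt_mul_of_pos_left hlog h
        have hpq : p i * (q i / p i - 1) = q i - p i := by field_simp
        rw [hlogeq] at he
        nlinarith
  have hle : ∀ i ∈ Finset.univ, p i - q i ≤ p i * Real.log (p i / q i) :=
    fun i _ => (key i).1
  have hsum2 : ∑ i, (p i - q i) = ∑ i, p i * Real.log (p i / q i) := by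
    rw [hMI, Finset.sum_sub_distrib, hsum, sub_self]
  have := (Finset.sum_eq_sum_iff_of_le hle).mp hsum2
  intro i
  exact (key i).2 ((this i (Finset.mem_univ i)).symm)

private lemma gibbs2 {α β : Type*} [Fintype α] [Fintype β] (p : α → β → ℝ)
    (hp : ∀ a b, 0 ≤ p a b) (hs : ∑ a, ∑ b, p a b = 1)
    (hMI : MI p = 0) :
    ∀ a b, p a b = (∑ b', p a b') * (∑ a', p a' b) := by
  set P : α × β → ℝ := fun x => p x.1 x.2 with hP
  set Q : α × β → ℝ := fun x => (∑ b', p x.1 b') * (∑ a', p a' x.2) with hQ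
  have hrow : ∀ a, 0 ≤ ∑ b', p a b' := fun a => Finset.sum_nonneg fun b _ => hp a b
  have hcol : ∀ b, 0 ≤ ∑ a', p a' b := fun b => Finset.sum_nonneg fun a _ => hp a b
  have h0 : ∀ x : α × β, Q x = 0 → P x = 0 := by
    intro ⟨a, b⟩ hq0
    simp only [hQ, hP]
    rcases mul_eq_zero.mp hq0 with h | h
    · exact (Finset.sum_eq_zero_iff_of_nonneg (fun b' _ => hp a b')).mp h b (Finset.mem_univ b)
    · exact (Finset.sum_eq_zero_iff_of_nonneg (fun a' _ => hp a' b)).mp h a (Finset.mem_univ a)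
  have hsumP : ∑ x, P x = 1 := by rw [Fintype.sum_prod_type]; exact hs
  have hsumQ : ∑ x, Q x = 1 := by
    rw [Fintype.sum_prod_type]
    simp only [hQ]
    have : ∀ a : α, ∑ b, (∑ b', p a b') * (∑ a', p a' b)
        = (∑ b', p a b') * ∑ b, ∑ a', p a' b := by
      intro a; rw [Finset.mul_sum]
    rw [Finset.sum_congr rfl fun a _ => this a]
    rw [Finset.sum_comm (γ := β)]
    rw [hs, ← Finset.sum_mul, hs, one_mul]
  have hMI' : ∑ x, P x * Real.log (P x / Q x) = 0 := by
    rw [Fintype.sum_prod_type]; exact hMI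
  have := gibbs1 P Q (fun x => hp x.1 x.2)
    (fun x => mul_nonneg (hrow x.1) (hcol x.2)) h0 (by rw [hsumP, hsumQ]) hMI'
  intro a b
  exact this (a, b)

/-- Binary source: if `𝒳 = {0,1}` and `X, Y` are not independent, then any
`X̂` with `Y − X − X̂` and `I(Y;X̂) = 0` satisfies `I(X;X̂) = 0`.
Moreover, for binary `X`, `Y` is weakly independent of `X` (rows linearly
dependent) iff `Y` and `X` are independent. -/
theorem stmt9 {Y Xh : Type*} [Fintype Y] [Fintype Xh]
    (pX : Bool → ℝ) (hpX : (∀ x, 0 < pX x) ∧ ∑ x, pX x = 1)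
    (chan : Bool → Y → ℝ) (hchan : IsChannel chan) :
    ((¬ ∀ x y, pX x * chan x y = pX x * (∑ x', pX x' * chan x' y)) →
      ∀ K : Bool → Xh → ℝ, IsChannel K →
        MI (fun y z => ∑ x, pX x * chan x y * K x z) = 0 →
        MI (fun x z => pX x * K x z) = 0) ∧
    (¬ LinearIndependent ℝ (fun x : Bool => (chan x : Y → ℝ)) ↔
      ∀ x y, pX x * chan x y = pX x * (∑ x', pX x' * chan x' y)) := by
  obtain ⟨hpos, hsum1⟩ := hpX
  obtain ⟨hcn, hcs⟩ := hchan
  have hB : pX true + pX false = 1 := by simpa [Fintype.sum_bool] using hsum1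
  have hiff : (∀ y, chan false y = chan true y) ↔
      (∀ x y, pX x * chan x y = pX x * (∑ x', pX x' * chan x' y)) := by
    constructor
    · intro h x y
      have hm : ∑ x', pX x' * chan x' y = chan x y := by
        rw [Fintype.sum_bool, h y]
        cases x
        · rw [h y]; linear_combination chan true y * hB
        · linear_combination chan true y * hB
      rw [hm]
    · intro h y
      have hf := mul_left_cancel₀ (ne_of_gt (hpos false)) (h false y)
      have ht := mul_left_cancel₀ (ne_of_gt (hpos true)) (h true y)
      rw [hf, ht]
  constructor
  · -- Part 1
    intro hnd K hK hMI0
    obtain ⟨hKn, hKs⟩ := hK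
    have hy0 : ∃ y0, chan false y0 ≠ chan true y0 := by
      by_contra hc
      push_neg at hc
      exact hnd (hiff.mp hc)
    obtain ⟨y0, hy0⟩ := hy0
    have hpn : ∀ y z, 0 ≤ ∑ x, pX x * chan x y * K x z :=
      fun y z => Finset.sum_nonneg fun x _ =>
        mul_nonneg (mul_nonneg (hpos x).le (hcn x y)) (hKn x z)
    have hrow : ∀ y, ∑ z, ∑ x, pX x * chan x y * K x z = ∑ x, pX x * chan x y := by
      intro y
      rw [Finset.sum_comm]
      refine Finset.sum_congr rfl fun x _ => ?_
      rw [← Finset.mul_sum, hKs x, mul_one]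
    have hcol : ∀ z, ∑ y, ∑ x, pX x * chan x y * K x z = ∑ x, pX x * K x z := by
      intro z
      rw [Finset.sum_comm]
      refine Finset.sum_congr rfl fun x _ => ?_
      have h1 : ∀ y : Y, pX x * chan x y * K x z = (pX x * K x z) * chan x y :=
        fun y => by ring
      rw [Finset.sum_congr rfl fun y _ => h1 y, ← Finset.mul_sum, hcs x, mul_one]
    have hs1 : ∑ y, ∑ z, ∑ x, pX x * chan x y * K x z = 1 := by
      rw [Finset.sum_congr rfl fun y (_ : y ∈ Finset.univ) => hrow y]
      rw [Finset.sum_comm]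
      rw [Finset.sum_congr rfl fun x (_ : x ∈ Finset.univ) =>
        (by rw [← Finset.mul_sum, hcs x, mul_one] : ∑ y, pX x * chan x y = pX x)]
      exact hsum1
    have hEq := gibbs2 (fun y z => ∑ x, pX x * chan x y * K x z) hpn hs1 hMI0
    have hKr : ∀ x z, K x z = ∑ x', pX x' * K x' z := by
      intro x z
      have hE := hEq y0 z
      rw [hrow y0, hcol z] at hE
      simp only [Fintype.sum_bool] at hE ⊢
      -- hE : pX t * c_t * K t + pX f * c_f * K f = (pX t * c_t + pX f * c_f) * R
      have E1 : pX false * (K false z - (pX true * K true z + pX false * K false z))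
          + pX true * (K true z - (pX true * K true z + pX false * K false z)) = 0 := by
        linear_combination -(pX true * K true z + pX false * K false z) * hB
      have E2 : pX false * chan false y0 * (K false z - (pX true * K true z + pX false * K false z))
          + pX true * chan true y0 * (K true z - (pX true * K true z + pX false * K false z)) = 0 := by
        linear_combination hE
      have hu : pX false * (K false z - (pX true * K true z + pX false * K false z))
          * (chan false y0 - chan true y0) = 0 := by
        linear_combination E2 - chan true y0 * E1
      have hu0 : pX false * (K false z - (pX true * K true z + pX false * K false z)) = 0 := by
        rcases mul_eq_zero.mp hu with h | h
        · exact h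
        · exact absurd (by linarith : chan false y0 = chan true y0) hy0
      have hfz : K false z = pX true * K true z + pX false * K false z := by
        rcases mul_eq_zero.mp hu0 with h | h
        · exact absurd h (ne_of_gt (hpos false))
        · linarith
      have htz : K true z = pX true * K true z + pX false * K false z := by
        have ht0 : pX true * (K true z - (pX true * K true z + pX false * K false z)) = 0 := by
          linarith [E1, hu0]
        rcases mul_eq_zero.mp ht0 with h | h
        · exact absurd h (ne_of_gt (hpos true))
        · linarith
      cases x
      · exact hfz
      · exact htz
    simp only [MI]
    refine Finset.sum_eq_zero fun x _ => Finset.sum_eq_zero fun z _ => ?_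
    have hrowK : ∑ z', pX x * K x z' = pX x := by rw [← Finset.mul_sum, hKs x, mul_one]
    by_cases hR : (∑ x', pX x' * K x' z) = 0
    · have hKz : K x z = 0 := by rw [hKr x z, hR]
      rw [hKz, mul_zero, zero_mul]
    · rw [hrowK, hKr x z, div_self (mul_ne_zero (ne_of_gt (hpos x)) hR),
        Real.log_one, mul_zero]
  · -- Part 2
    constructor
    · intro hnli
      rw [← hiff]
      rw [Fintype.not_linearIndependent_iff] at hnli
      obtain ⟨g, hg0, i, hgi⟩ := hnli
      have hy : ∀ y, g true * chan true y + g false * chan false y = 0 := by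
        intro y
        have := congrFun hg0 y
        simpa [Fintype.sum_bool, Finset.sum_apply] using this
      have hgsum : g true + g false = 0 := by
        have hz : ∑ y, (g true * chan true y + g false * chan false y) = 0 := by
          simp [hy]
        rw [Finset.sum_add_distrib, ← Finset.mul_sum, ← Finset.mul_sum, hcs, hcs,
          mul_one, mul_one] at hz
        exact hz
      have hgt : g true ≠ 0 := by
        cases i with
        | false => intro h; apply hgi; linarith
        | true => exact hgi
      intro y
      have h2 : g true * (chan true y - chan false y) = 0 := by
        linear_combination hy y - chan false y * hgsum
      rcases mul_eq_zero.mp h2 with h | h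
      · exact absurd h hgt
      · linarith
    · intro h
      intro hli
      rw [← hiff] at h
      exact absurd (hli.injective (funext fun y => h y)) (by simp)
end

section
/- (Explicit example where constant overwriting is suboptimal.) Let 𝒴 = {0,1}, 𝒳 = X̂ = {0,1,2}, P_X uniform, P_{Y|X}(0|0)=1, P_{Y|X}(1|1)=P_{Y|X}(1|2)=1, c(x,x̂)=1{x≠x̂}, and channel P_{X̂|X} with rows (1/3,1/3,1/3), (1/6,2/3,1/6), (1/2,0,1/2). Then: (i) Y and X̂ are independent; (ii) E[c(X,X̂)] = 1/2; (iii) Γ_min := min_{x̂} E[c(X,x̂)] = 2/3; hence the minimum over X̂ with Y−X−X̂ and I(Y;X̂)=0 of E[c(X,X̂)] is at most 1/2 < Γ_min. -/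
open scoped BigOperators

/-- The uniform source on `{0,1,2}`. -/
noncomputable def pXe : Fin 3 → ℝ := fun _ => 1 / 3

/-- The channel `P_{Y|X}` of the example. -/
noncomputable def chanE : Fin 3 → Fin 2 → ℝ := ![![1, 0], ![0, 1], ![0, 1]]

/-- The channel `P_{X̂|X}` of the example. -/
noncomputable def K10 : Fin 3 → Fin 3 → ℝ :=
  ![![1/3, 1/3, 1/3], ![1/6, 2/3, 1/6], ![1/2, 0, 1/2]]

/-- Hamming cost. -/
noncomputable def cE : Fin 3 → Fin 3 → ℝ := fun x z => if x = z then 0 else 1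

/-!
Under `K10` the output `X̂` is independent of `Y`, so the mutual information of the joint law of
`(Y, X̂)` vanishes and `K10` competes in the infimum with its expected cost `1/2`, whereas a
constant `X̂` misses the uniform `X` with probability `2/3`.
-/

section Cascade

variable {α β γ : Type*} [Fintype α]

theorem MI_eq_zero_of_eq_marginal_mul [Fintype β] [Fintype γ] {p : β → γ → ℝ}
    (h : ∀ b c, p b c = (∑ c', p b c') * (∑ b', p b' c)) : MI p = 0 := by
  refine Finset.sum_eq_zero fun b _ => Finset.sum_eq_zero fun c _ => ?_
  rw [← h b c]
  by_cases hp : p b c = 0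
  · rw [hp, zero_mul]
  · rw [div_self hp, Real.log_one, mul_zero]

theorem sum_cascade_left [Fintype β] (p : α → ℝ) {W : α → β → ℝ} (hW : ∀ a, ∑ b, W a b = 1)
    (K : α → γ → ℝ) (c : γ) : ∑ b, ∑ a, p a * W a b * K a c = ∑ a, p a * K a c := by
  rw [Finset.sum_comm]
  refine Finset.sum_congr rfl fun a _ => ?_
  rw [← Finset.sum_mul, ← Finset.mul_sum, hW, mul_one]

theorem sum_cascade_right [Fintype γ] (p : α → ℝ) (W : α → β → ℝ) {K : α → γ → ℝ}
    (hK : ∀ a, ∑ c, K a c = 1) (b : β) : ∑ c, ∑ a, p a * W a b * K a c = ∑ a, p a * W a b := by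
  rw [Finset.sum_comm]
  refine Finset.sum_congr rfl fun a _ => ?_
  rw [← Finset.mul_sum, hK, mul_one]

theorem MI_cascade_eq_zero_of_indep [Fintype β] [Fintype γ] (p : α → ℝ) {W : α → β → ℝ}
    {K : α → γ → ℝ} (hW : ∀ a, ∑ b, W a b = 1) (hK : ∀ a, ∑ c, K a c = 1)
    (hindep : ∀ b c, ∑ a, p a * W a b * K a c = (∑ a, p a * W a b) * (∑ a, p a * K a c)) :
    MI (fun b c => ∑ a, p a * W a b * K a c) = 0 :=
  MI_eq_zero_of_eq_marginal_mul fun b c => by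
    rw [sum_cascade_right p W hK, sum_cascade_left p hW K, hindep]

theorem expectedCost_nonneg [Fintype β] {p : α → ℝ} {K cost : α → β → ℝ} (hp : 0 ≤ p)
    (hK : ∀ a b, 0 ≤ K a b) (hcost : 0 ≤ cost) : 0 ≤ ∑ a, ∑ b, p a * K a b * cost a b :=
  Finset.sum_nonneg fun a _ => Finset.sum_nonneg fun b _ =>
    mul_nonneg (mul_nonneg (hp a) (hK a b)) (hcost a b)

end Cascade

theorem pXe_nonneg : 0 ≤ pXe := fun _ => by norm_num [pXe]

theorem cE_nonneg : 0 ≤ cE := fun x z => by unfold cE; split_ifs <;> norm_num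

theorem chanE_sum_eq_one (x : Fin 3) : ∑ y, chanE x y = 1 := by
  fin_cases x <;> simp [chanE, Fin.sum_univ_two]

theorem K10_isChannel : IsChannel K10 := by
  refine ⟨fun x z => ?_, fun x => ?_⟩
  · fin_cases x <;> fin_cases z <;> norm_num [K10]
  · fin_cases x <;> (simp [K10, Fin.sum_univ_three]; norm_num)

theorem K10_indep (y : Fin 2) (z : Fin 3) :
    ∑ x, pXe x * chanE x y * K10 x z = (∑ x, pXe x * chanE x y) * (∑ x, pXe x * K10 x z) := by
  fin_cases y <;> fin_cases z <;> simp [Fin.sum_univ_three, pXe, chanE, K10] <;> norm_num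

theorem expectedCost_K10 : ∑ x, ∑ z, pXe x * K10 x z * cE x z = 1 / 2 := by
  simp [Fin.sum_univ_three, pXe, K10, cE]
  norm_num

theorem expectedCost_const (z : Fin 3) : ∑ x, pXe x * cE x z = 2 / 3 := by
  fin_cases z <;> simp [Fin.sum_univ_three, pXe, cE] <;> norm_num

/-- Explicit example where constant overwriting is suboptimal:
`Y ⟂ X̂`, `E[c(X,X̂)] = 1/2`, `Γ_min = 2/3`, hence the minimum over
`X̂` with `Y − X − X̂` and `I(Y;X̂) = 0` is at most `1/2 < Γ_min`. -/
theorem stmt10 :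
    (∀ y z, (∑ x, pXe x * chanE x y * K10 x z)
        = (∑ x, pXe x * chanE x y) * (∑ x, pXe x * K10 x z)) ∧
    (∑ x, ∑ z, pXe x * K10 x z * cE x z) = 1 / 2 ∧
    (⨅ z : Fin 3, ∑ x, pXe x * cE x z) = 2 / 3 ∧
    sInf {v | ∃ K : Fin 3 → Fin 3 → ℝ, IsChannel K ∧
        MI (fun y z => ∑ x, pXe x * chanE x y * K x z) = 0 ∧
        v = ∑ x, ∑ z, pXe x * K x z * cE x z} ≤ 1 / 2 ∧
    (1 / 2 : ℝ) < 2 / 3 := by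
  refine ⟨K10_indep, expectedCost_K10, ?_, ?_, by norm_num⟩
  · simp_rw [expectedCost_const]
    exact ciInf_const
  · have hbdd : BddBelow {v | ∃ K : Fin 3 → Fin 3 → ℝ, IsChannel K ∧
        MI (fun y z => ∑ x, pXe x * chanE x y * K x z) = 0 ∧
        v = ∑ x, ∑ z, pXe x * K x z * cE x z} := by
      refine ⟨0, ?_⟩
      rintro v ⟨K, hK, -, rfl⟩
      exact expectedCost_nonneg pXe_nonneg hK.1 cE_nonneg
    have hK10_MI : MI (fun y z => ∑ x, pXe x * chanE x y * K10 x z) = 0 :=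
      MI_cascade_eq_zero_of_indep pXe chanE_sum_eq_one K10_isChannel.2 K10_indep
    exact csInf_le hbdd ⟨K10, K10_isChannel, hK10_MI, expectedCost_K10.symm⟩
end

section
/- (Continuity of the constrained minimum cost at ε = 0.) For finite 𝒴, X̂ and fixed P_{XY}, define D(ε) = min over X̂ with Y − X − X̂ and I(Y;X̂) ≤ ε of E[c(X,X̂)]. Then lim_{ε ↓ 0} D(ε) = D(0). -/
open scoped BigOperators

/-- The constrained minimum cost `D(ε) = min_{X̂ : Y−X−X̂, I(Y;X̂) ≤ ε} E[c(X,X̂)]`. -/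
noncomputable def Dfun {X Y Xh : Type*} [Fintype X] [Fintype Y] [Fintype Xh]
    (pxy : X → Y → ℝ) (c : X → Xh → ℝ) (ε : ℝ) : ℝ :=
  sInf {v | ∃ K : X → Xh → ℝ, IsChannel K ∧
      MI (fun y z => ∑ x, pxy x y * K x z) ≤ ε ∧
      v = ∑ x, ∑ z, (∑ y, pxy x y) * K x z * c x z}

/-- Key elementary continuity fact: `(a, s) ↦ a * log s` is continuous on the region
`0 ≤ a ≤ s ≤ 1`. -/
private lemma core_cont : ContinuousOn (fun p : ℝ × ℝ => p.1 * Real.log p.2)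
    {p : ℝ × ℝ | 0 ≤ p.1 ∧ p.1 ≤ p.2 ∧ p.2 ≤ 1} := by
  intro p hp
  obtain ⟨h0, h1, h2⟩ := hp
  rcases (h0.trans h1).lt_or_eq with hs | hs
  · exact (continuousAt_fst.mul
      ((Real.continuousAt_log hs.ne').comp continuousAt_snd)).continuousWithinAt
  · -- here `p.2 = 0`, hence `p.1 = 0`
    have hp1 : p.1 = 0 := le_antisymm (hs ▸ h1) h0
    have hval : p.1 * Real.log p.2 = 0 := by rw [hp1, zero_mul]
    unfold ContinuousWithinAt
    rw [show ((fun p : ℝ × ℝ => p.1 * Real.log p.2) p : ℝ) = 0 from hval]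
    apply tendsto_of_tendsto_of_tendsto_of_le_of_le'
      (g := fun q : ℝ × ℝ => q.2 * Real.log q.2) (h := fun _ : ℝ × ℝ => (0:ℝ))
    · have h := ((Real.continuous_mul_log.comp continuous_snd).tendsto p).mono_left
        (nhdsWithin_le_nhds (s := {p : ℝ × ℝ | 0 ≤ p.1 ∧ p.1 ≤ p.2 ∧ p.2 ≤ 1}))
      simp only [Function.comp] at h
      have : p.2 * Real.log p.2 = 0 := by rw [← hs, zero_mul]
      rwa [this] at h
    · exact tendsto_const_nhds
    · filter_upwards [self_mem_nhdsWithin] with q hq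
      exact mul_le_mul_of_nonpos_right hq.2.1
        (Real.log_nonpos (hq.1.trans hq.2.1) hq.2.2)
    · filter_upwards [self_mem_nhdsWithin] with q hq
      exact mul_nonpos_iff.mpr (Or.inl ⟨hq.1, Real.log_nonpos (hq.1.trans hq.2.1) hq.2.2⟩)

/-- Continuity of the constrained minimum cost at `ε = 0`. -/
theorem stmt11 {X Y Xh : Type*} [Fintype X] [Fintype Y] [Fintype Xh] [Nonempty Xh]
    (pxy : X → Y → ℝ) (hpxy : IsPMF2 pxy)
    (c : X → Xh → ℝ) (hc : ∀ x z, 0 ≤ c x z) :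
    Filter.Tendsto (Dfun pxy c) (nhdsWithin 0 (Set.Ioi 0)) (nhds (Dfun pxy c 0)) := by
  classical
  obtain ⟨hpos, hsum⟩ := hpxy
  obtain ⟨pY, hpY⟩ : ∃ f : Y → ℝ, ∀ y, f y = ∑ x, pxy x y :=
    ⟨fun y => ∑ x, pxy x y, fun _ => rfl⟩
  have hpY_nonneg : ∀ y, 0 ≤ pY y := fun y => by
    rw [hpY]; exact Finset.sum_nonneg fun x _ => hpos x y
  have hpY_sum : ∑ y, pY y = 1 := by
    simp only [hpY]; rw [Finset.sum_comm]; exact hsum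
  set cost : (X → Xh → ℝ) → ℝ :=
    fun K => ∑ x, ∑ z, (∑ y, pxy x y) * K x z * c x z with hcost
  set mi : (X → Xh → ℝ) → ℝ :=
    fun K => MI (fun y z => ∑ x, pxy x y * K x z) with hmi
  set C : Set (X → Xh → ℝ) := {K | IsChannel K} with hCdef
  have hDfun : ∀ ε : ℝ, Dfun pxy c ε
      = sInf {v | ∃ K, IsChannel K ∧ mi K ≤ ε ∧ v = cost K} := fun ε => rfl
  -- entries of a channel are at most 1
  have hK_le_one : ∀ K : X → Xh → ℝ, IsChannel K → ∀ x z, K x z ≤ 1 := by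
    intro K hK x z
    have := Finset.single_le_sum (f := fun z => K x z) (fun z' _ => hK.1 x z')
      (Finset.mem_univ z)
    rwa [hK.2 x] at this
  -- cost is continuous and nonnegative on channels
  have heval : ∀ (x : X) (z : Xh), Continuous fun K : X → Xh → ℝ => K x z :=
    fun x z => (continuous_apply z).comp (continuous_apply x)
  have hcost_cont : Continuous cost := by
    apply continuous_finset_sum _ fun x _ => continuous_finset_sum _ fun z _ => ?_
    exact (continuous_const.mul (heval x z)).mul continuous_const
  have hcost_nonneg : ∀ K : X → Xh → ℝ, IsChannel K → 0 ≤ cost K := by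
    intro K hK
    apply Finset.sum_nonneg fun x _ => Finset.sum_nonneg fun z _ => ?_
    have hpX : 0 ≤ ∑ y, pxy x y := Finset.sum_nonneg fun y _ => hpos x y
    exact mul_nonneg (mul_nonneg hpX (hK.1 x z)) (hc x z)
  -- C is compact
  have hC_closed : IsClosed C := by
    have : C = ({K : X → Xh → ℝ | ∀ x z, 0 ≤ K x z} ∩
        {K : X → Xh → ℝ | ∀ x, ∑ z, K x z = 1}) := by
      ext K; constructor
      · intro hK; exact ⟨hK.1, hK.2⟩
      · intro hK; exact ⟨hK.1, hK.2⟩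
    rw [this]
    apply IsClosed.inter
    · rw [Set.setOf_forall]
      refine isClosed_iInter fun x => ?_
      rw [Set.setOf_forall]
      exact isClosed_iInter fun z => isClosed_le continuous_const (heval x z)
    · rw [Set.setOf_forall]
      refine isClosed_iInter fun x => isClosed_eq ?_ continuous_const
      exact continuous_finset_sum _ fun z _ => heval x z
  have hC_compact : IsCompact C := by
    refine IsCompact.of_isClosed_subset
      (isCompact_univ_pi fun _ : X => isCompact_univ_pi fun _ : Xh => isCompact_Icc
        (a := (0:ℝ)) (b := 1)) hC_closed ?_
    intro K hK
    intro x _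
    intro z _
    exact ⟨hK.1 x z, hK_le_one K hK x z⟩
  -- continuity of the mutual information on C
  have hA_cont : ∀ (y : Y) (z : Xh),
      Continuous fun K : X → Xh → ℝ => ∑ x, pxy x y * K x z := by
    intro y z
    exact continuous_finset_sum _ fun x _ => continuous_const.mul (heval x z)
  have hS_cont : ∀ z : Xh,
      Continuous fun K : X → Xh → ℝ => ∑ y', ∑ x, pxy x y' * K x z := by
    intro z
    exact continuous_finset_sum _ fun y' _ => hA_cont y' z
  have hA_nonneg : ∀ (K : X → Xh → ℝ), IsChannel K → ∀ y z,
      0 ≤ ∑ x, pxy x y * K x z := by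
    intro K hK y z
    exact Finset.sum_nonneg fun x _ => mul_nonneg (hpos x y) (hK.1 x z)
  have hA_le_S : ∀ (K : X → Xh → ℝ), IsChannel K → ∀ y z,
      (∑ x, pxy x y * K x z) ≤ ∑ y', ∑ x, pxy x y' * K x z := by
    intro K hK y z
    exact Finset.single_le_sum (f := fun y' => ∑ x, pxy x y' * K x z)
      (fun y' _ => hA_nonneg K hK y' z) (Finset.mem_univ y)
  have hS_le_one : ∀ (K : X → Xh → ℝ), IsChannel K → ∀ z,
      (∑ y', ∑ x, pxy x y' * K x z) ≤ 1 := by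
    intro K hK z
    calc (∑ y', ∑ x, pxy x y' * K x z) ≤ ∑ y', ∑ x, pxy x y' := by
          apply Finset.sum_le_sum fun y' _ => Finset.sum_le_sum fun x _ => ?_
          calc pxy x y' * K x z ≤ pxy x y' * 1 :=
                mul_le_mul_of_nonneg_left (hK_le_one K hK x z) (hpos x y')
            _ = pxy x y' := mul_one _
      _ = 1 := by rw [Finset.sum_comm]; exact hsum
  have hA_le_pY : ∀ (K : X → Xh → ℝ), IsChannel K → ∀ y z,
      (∑ x, pxy x y * K x z) ≤ pY y := by
    intro K hK y z
    rw [hpY]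
    apply Finset.sum_le_sum fun x _ => ?_
    calc pxy x y * K x z ≤ pxy x y * 1 :=
          mul_le_mul_of_nonneg_left (hK_le_one K hK x z) (hpos x y)
      _ = pxy x y := mul_one _
  have hrow : ∀ (K : X → Xh → ℝ), IsChannel K → ∀ y,
      (∑ z', ∑ x, pxy x y * K x z') = pY y := by
    intro K hK y
    rw [Finset.sum_comm]
    calc (∑ x, ∑ z', pxy x y * K x z')
        = ∑ x, pxy x y * ∑ z', K x z' := by
          refine Finset.sum_congr rfl fun x _ => ?_
          rw [Finset.mul_sum]
      _ = ∑ x, pxy x y := by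
          refine Finset.sum_congr rfl fun x _ => ?_
          rw [hK.2 x, mul_one]
      _ = pY y := (hpY y).symm
  have hmi_cont : ContinuousOn mi C := by
    have hmi_eq : mi = fun K => ∑ y, ∑ z,
        (∑ x, pxy x y * K x z) * Real.log ((∑ x, pxy x y * K x z) /
          ((∑ z', ∑ x, pxy x y * K x z') * (∑ y', ∑ x, pxy x y' * K x z))) := rfl
    rw [hmi_eq]
    apply continuousOn_finset_sum _ fun y _ => ?_
    apply continuousOn_finset_sum _ fun z _ => ?_
    -- decompose the term on C
    have hg_cont : ContinuousOn
        (fun K : X → Xh → ℝ =>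
          (∑ x, pxy x y * K x z) * Real.log (∑ x, pxy x y * K x z)
          - (∑ x, pxy x y * K x z) * Real.log (pY y)
          - (∑ x, pxy x y * K x z)
              * Real.log (∑ y', ∑ x, pxy x y' * K x z)) C := by
      apply ContinuousOn.sub
      apply ContinuousOn.sub
      · exact (Real.continuous_mul_log.comp (hA_cont y z)).continuousOn
      · exact ((hA_cont y z).mul continuous_const).continuousOn
      · refine core_cont.comp (((hA_cont y z).prodMk (hS_cont z)).continuousOn) ?_
        intro K hK
        exact ⟨hA_nonneg K hK y z, hA_le_S K hK y z, hS_le_one K hK z⟩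
    refine ContinuousOn.congr hg_cont ?_
    intro K hK
    have hKc : IsChannel K := hK
    simp only
    rw [hrow K hKc y]
    rcases eq_or_ne (∑ x, pxy x y * K x z) 0 with h0 | h0
    · rw [h0]
      simp
    · have hApos : 0 < ∑ x, pxy x y * K x z :=
        lt_of_le_of_ne (hA_nonneg K hKc y z) (Ne.symm h0)
      have hpYpos : 0 < pY y := lt_of_lt_of_le hApos (hA_le_pY K hKc y z)
      have hSpos : 0 < ∑ y', ∑ x, pxy x y' * K x z :=
        lt_of_lt_of_le hApos (hA_le_S K hKc y z)
      rw [Real.log_div h0 (mul_ne_zero hpYpos.ne' hSpos.ne'),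
        Real.log_mul hpYpos.ne' hSpos.ne']
      ring
  -- the uniform channel is feasible with zero mutual information
  obtain ⟨n, hn⟩ : ∃ n : ℝ, n = (Fintype.card Xh : ℝ) := ⟨_, rfl⟩
  have hn_pos : 0 < n := by
    rw [hn]
    exact_mod_cast Fintype.card_pos
  obtain ⟨K0, hK0⟩ : ∃ K : X → Xh → ℝ, ∀ x z, K x z = n⁻¹ :=
    ⟨fun _ _ => n⁻¹, fun _ _ => rfl⟩
  have hK0_chan : IsChannel K0 := by
    constructor
    · intro a b; rw [hK0]; exact inv_nonneg.mpr hn_pos.le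
    · intro a
      simp only [hK0]
      rw [Finset.sum_const, Finset.card_univ, nsmul_eq_mul, ← hn,
        mul_inv_cancel₀ hn_pos.ne']
  have hmiK0 : mi K0 = 0 := by
    have hq0 : ∀ (y : Y) (z : Xh), (∑ x, pxy x y * K0 x z) = pY y * n⁻¹ := by
      intro y z
      simp only [hK0]
      rw [← Finset.sum_mul, hpY]
    show MI (fun y z => ∑ x, pxy x y * K0 x z) = 0
    unfold MI
    apply Finset.sum_eq_zero fun y _ => Finset.sum_eq_zero fun z _ => ?_
    simp only [hq0]
    have hrow0 : (∑ _z' : Xh, pY y * n⁻¹) = n * (pY y * n⁻¹) := by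
      rw [Finset.sum_const, Finset.card_univ, nsmul_eq_mul, ← hn]
    have hcol0 : (∑ y', pY y' * n⁻¹) = n⁻¹ := by
      rw [← Finset.sum_mul, hpY_sum, one_mul]
    rw [hrow0, hcol0]
    have hden : n * (pY y * n⁻¹) * n⁻¹ = pY y * n⁻¹ := by
      field_simp
    rw [hden]
    rcases eq_or_ne (pY y * n⁻¹) 0 with h0 | h0
    · rw [h0, zero_mul]
    · rw [div_self h0, Real.log_one, mul_zero]
  -- basic properties of the feasible-value sets
  set Sv : ℝ → Set ℝ := fun ε => {v | ∃ K, IsChannel K ∧ mi K ≤ ε ∧ v = cost K}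
    with hSv
  have hbdd : ∀ ε, BddBelow (Sv ε) := by
    intro ε
    refine ⟨0, fun v hv => ?_⟩
    obtain ⟨K, hK, _, hvK⟩ := hv
    rw [hvK]
    exact hcost_nonneg K hK
  have hne : ∀ ε : ℝ, 0 ≤ ε → (Sv ε).Nonempty := by
    intro ε hε
    exact ⟨cost K0, K0, hK0_chan, by rw [hmiK0]; exact hε, rfl⟩
  have hsubset : ∀ ε : ℝ, 0 ≤ ε → Sv 0 ⊆ Sv ε := by
    intro ε hε v hv
    obtain ⟨K, hK, hKmi, hvK⟩ := hv
    exact ⟨K, hK, hKmi.trans hε, hvK⟩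
  have hmono : ∀ ε : ℝ, 0 ≤ ε → Dfun pxy c ε ≤ Dfun pxy c 0 := by
    intro ε hε
    rw [hDfun, hDfun]
    exact csInf_le_csInf (hbdd ε) (hne 0 le_rfl) (hsubset ε hε)
  -- the key claim via compactness
  have hclaim : ∀ η : ℝ, 0 < η → ∃ δ : ℝ, 0 < δ ∧
      ∀ K : X → Xh → ℝ, IsChannel K → mi K < δ →
        Dfun pxy c 0 - η ≤ cost K := by
    intro η hη
    set D0 := Dfun pxy c 0 with hD0
    set F : Set (X → Xh → ℝ) := C ∩ cost ⁻¹' Set.Iic (D0 - η) with hF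
    by_cases hFne : F.Nonempty
    · have hF_compact : IsCompact F :=
        hC_compact.inter_right (isClosed_Iic.preimage hcost_cont)
      obtain ⟨Ks, hKsF, hKsmin⟩ :=
        hF_compact.exists_isMinOn hFne (hmi_cont.mono Set.inter_subset_left)
      rcases le_or_gt (mi Ks) 0 with hm | hm
      · exfalso
        have hKs_chan : IsChannel Ks := hKsF.1
        have hmem : cost Ks ∈ Sv 0 := ⟨Ks, hKs_chan, hm, rfl⟩
        have h1 : D0 ≤ cost Ks := by
          rw [hD0, hDfun]
          exact csInf_le (hbdd 0) hmem
        have h2 : cost Ks ≤ D0 - η := hKsF.2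
        linarith
      · refine ⟨mi Ks, hm, fun K hK hKm => ?_⟩
        by_contra hcon
        push_neg at hcon
        have hKF : K ∈ F := Set.mem_inter hK
          (by simp only [Set.mem_preimage, Set.mem_Iic]; linarith)
        have := hKsmin hKF
        exact absurd hKm (not_lt.mpr this)
    · refine ⟨1, one_pos, fun K hK _ => ?_⟩
      by_contra hcon
      push_neg at hcon
      exact hFne ⟨K, Set.mem_inter hK
        (by simp only [Set.mem_preimage, Set.mem_Iic]; linarith)⟩
  -- conclude
  rw [Metric.tendsto_nhdsWithin_nhds]
  intro η hη
  obtain ⟨δ, hδ, hδprop⟩ := hclaim (η / 2) (by linarith)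
  refine ⟨δ, hδ, fun {ε} hε hdist => ?_⟩
  have hε0 : 0 < ε := hε
  have hεδ : ε < δ := by
    rw [Real.dist_eq, sub_zero, abs_of_pos hε0] at hdist
    exact hdist
  have hlow : Dfun pxy c 0 - η / 2 ≤ Dfun pxy c ε := by
    rw [hDfun]
    apply le_csInf (hne ε hε0.le)
    intro v hv
    obtain ⟨K, hK, hKmi, hvK⟩ := hv
    rw [hvK]
    exact hδprop K hK (lt_of_le_of_lt hKmi hεδ)
  have hup : Dfun pxy c ε ≤ Dfun pxy c 0 := hmono ε hε0.le
  rw [Real.dist_eq]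
  have habs : |Dfun pxy c ε - Dfun pxy c 0| ≤ η / 2 :=
    abs_le.mpr ⟨by linarith, by linarith⟩
  linarith
end

section
/- (Data processing for the spectral sup-entropy rate.) Let φ_n: 𝒳^n × 𝒵^n → 𝒴^n be arbitrary mappings and set Ỹ^n = φ_n(X^n, Z^n). Then the spectral conditional sup-entropy rates satisfy H̄(X|Z) ≥ H̄(Ỹ|Z), where H̄(X|Z) = p-limsup_n (1/n) log 1/P_{X^n|Z^n}(X^n|Z^n). -/
open scoped BigOperators

/-- Spectral conditional sup-entropy rate `H̄(X|Z)` of a general source: the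
infimum of all `α` such that `Pr{(1/n) log 1/P_{X^n|Z^n}(X^n|Z^n) > α} → 0`. -/
noncomputable def specSupEnt {𝒳 𝒵 : Type*} [Fintype 𝒳] [Fintype 𝒵]
    (p : (n : ℕ) → (Fin n → 𝒳) → (Fin n → 𝒵) → ℝ) : ℝ :=
  sInf {α : ℝ | Filter.Tendsto
    (fun n => ∑ x : Fin n → 𝒳, ∑ z : Fin n → 𝒵,
      if α < (1 / (n : ℝ)) * Real.log (1 / (p n x z / (∑ x', p n x' z)))
      then p n x z else 0)
    Filter.atTop (nhds 0)}

/-- Joint distribution of `(Ỹ^n, Z^n)` where `Ỹ^n = φ_n(X^n, Z^n)`. -/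
noncomputable def pushJoint {𝒳 𝒴 𝒵 : Type*} [Fintype 𝒳] [DecidableEq 𝒴]
    (p : (n : ℕ) → (Fin n → 𝒳) → (Fin n → 𝒵) → ℝ)
    (φ : (n : ℕ) → (Fin n → 𝒳) → (Fin n → 𝒵) → (Fin n → 𝒴)) :
    (n : ℕ) → (Fin n → 𝒴) → (Fin n → 𝒵) → ℝ :=
  fun n y z => ∑ x, if φ n x z = y then p n x z else 0

/-!
Both rates are p-limsups, over the same probability space `(X^n, Z^n)`, of self-information
rates. Given `Z^n = z`, the event `Ỹ^n = φ_n(x, z)` contains `X^n = x`, so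
`P_{Ỹ|Z}(φ_n(x,z)|z) ≥ P_{X|Z}(x|z)`: the `Ỹ`-rate lies below the `X`-rate wherever the source
has mass, and every `α` whose tail vanishes for `X` also does for `Ỹ`. Comparing the infima
needs the `Ỹ`-set bounded below (the rate is nonnegative, so the set lies in `[0, ∞)`) and the
`X`-set nonempty (`sInf ∅ = 0`): the tail beyond `α` has mass at most `(|𝒳| |𝒵| e^{-α})^n`,
which tends to `0` once `e^α > |𝒳| |𝒵|`.
-/

open Filter Topology

section PLimsup

variable {Ω : ℕ → Type*} [∀ n, Fintype (Ω n)]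

noncomputable def tailProb (P s : ∀ n, Ω n → ℝ) (α : ℝ) (n : ℕ) : ℝ :=
  ∑ ω, if α < s n ω then P n ω else 0

noncomputable def pLimsup (P s : ∀ n, Ω n → ℝ) : ℝ :=
  sInf {α | Tendsto (tailProb P s α) atTop (𝓝 0)}

variable {P s t : ∀ n, Ω n → ℝ}

lemma tailProb_nonneg (hP : ∀ n ω, 0 ≤ P n ω) (α : ℝ) (n : ℕ) : 0 ≤ tailProb P s α n :=
  Finset.sum_nonneg fun ω _ => by split_ifs <;> simp [hP n ω]

lemma tailProb_le_tailProb (hP : ∀ n ω, 0 ≤ P n ω)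
    (hst : ∀ n ω, 0 < P n ω → s n ω ≤ t n ω) (α : ℝ) (n : ℕ) :
    tailProb P s α n ≤ tailProb P t α n := by
  refine Finset.sum_le_sum fun ω _ => ?_
  rcases (hP n ω).eq_or_lt with h0 | hpos
  · simp [← h0]
  · by_cases hs : α < s n ω
    · simp [hs, hs.trans_le (hst n ω hpos)]
    · split_ifs <;> simp [hP n ω]

lemma tendsto_tailProb_mono (hP : ∀ n ω, 0 ≤ P n ω)
    (hst : ∀ n ω, 0 < P n ω → s n ω ≤ t n ω) {α : ℝ}
    (ht : Tendsto (tailProb P t α) atTop (𝓝 0)) : Tendsto (tailProb P s α) atTop (𝓝 0) :=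
  squeeze_zero (tailProb_nonneg hP α) (tailProb_le_tailProb hP hst α) ht

lemma nonneg_of_tendsto_tailProb (hP : ∀ n ω, 0 ≤ P n ω) (hP1 : ∀ n, ∑ ω, P n ω = 1)
    (hs : ∀ n ω, 0 < P n ω → 0 ≤ s n ω) {α : ℝ}
    (h : Tendsto (tailProb P s α) atTop (𝓝 0)) : 0 ≤ α := by
  by_contra! hα
  have hone : tailProb P s α = fun _ => 1 := by
    funext n
    rw [← hP1 n]
    refine Finset.sum_congr rfl fun ω _ => ?_
    rcases (hP n ω).eq_or_lt with h0 | hpos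
    · simp [← h0]
    · simp [hα.trans_le (hs n ω hpos)]
  rw [hone] at h
  exact one_ne_zero (tendsto_nhds_unique tendsto_const_nhds h)

lemma tendsto_tailProb_of_le_pow (hP : ∀ n ω, 0 ≤ P n ω) {c r α : ℝ}
    (hcard : ∀ n, (Fintype.card (Ω n) : ℝ) ≤ c ^ n) (hr : 0 ≤ r) (hcr : c * r < 1)
    (h : ∀ n ω, 0 < P n ω → α < s n ω → P n ω ≤ r ^ n) :
    Tendsto (tailProb P s α) atTop (𝓝 0) := by
  have hc : 0 ≤ c := by simpa using (Nat.cast_nonneg _).trans (hcard 1)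
  have hbound : ∀ n, tailProb P s α n ≤ (c * r) ^ n := fun n =>
    calc tailProb P s α n ≤ ∑ _ω : Ω n, r ^ n :=
          Finset.sum_le_sum fun ω _ => by
            split_ifs with hs
            · rcases (hP n ω).eq_or_lt with h0 | hpos
              · rw [← h0]; positivity
              · exact h n ω hpos hs
            · positivity
      _ = Fintype.card (Ω n) * r ^ n := by simp
      _ ≤ c ^ n * r ^ n := by gcongr; exact hcard n
      _ = (c * r) ^ n := (mul_pow c r n).symm
  exact squeeze_zero (tailProb_nonneg hP α) hbound
    (tendsto_pow_atTop_nhds_zero_of_lt_one (by positivity) hcr)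

lemma pLimsup_mono (hP : ∀ n ω, 0 ≤ P n ω) (hP1 : ∀ n, ∑ ω, P n ω = 1)
    (hs : ∀ n ω, 0 < P n ω → 0 ≤ s n ω) (hst : ∀ n ω, 0 < P n ω → s n ω ≤ t n ω)
    (ht : ∃ α, Tendsto (tailProb P t α) atTop (𝓝 0)) : pLimsup P s ≤ pLimsup P t :=
  csInf_le_csInf ⟨0, fun _ hα => nonneg_of_tendsto_tailProb hP hP1 hs hα⟩ ht
    fun _ hα => tendsto_tailProb_mono hP hst hα

end PLimsup

noncomputable def selfInfoRate (n : ℕ) (a : ℝ) : ℝ :=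
  1 / n * Real.log (1 / a)

lemma selfInfoRate_nonneg (n : ℕ) {a : ℝ} (ha : 0 < a) (ha1 : a ≤ 1) : 0 ≤ selfInfoRate n a :=
  mul_nonneg (by positivity) (Real.log_nonneg (one_le_one_div ha ha1))

lemma selfInfoRate_anti (n : ℕ) {a b : ℝ} (ha : 0 < a) (hab : a ≤ b) :
    selfInfoRate n b ≤ selfInfoRate n a :=
  mul_le_mul_of_nonneg_left
    (Real.log_le_log (one_div_pos.mpr (ha.trans_le hab)) (one_div_le_one_div_of_le ha hab))
    (by positivity)

lemma le_exp_neg_pow_of_lt_selfInfoRate {n : ℕ} {a α : ℝ} (hα : 0 ≤ α) (ha : 0 < a)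
    (h : α < selfInfoRate n a) : a ≤ Real.exp (-α) ^ n := by
  rcases n.eq_zero_or_pos with rfl | hn
  · simp [selfInfoRate] at h
    linarith
  have hlog : Real.log a < n * -α := by
    rw [selfInfoRate, one_div_mul_eq_div, lt_div_iff₀ (by positivity), one_div,
      Real.log_inv] at h
    linarith
  rw [← Real.exp_nat_mul, ← Real.exp_log ha]
  exact Real.exp_le_exp.mpr hlog.le

section Marginal

variable {α β : Type*} [Fintype α] [Fintype β] {p : α → β → ℝ}

lemma IsPMF2.le_marginal (hp : IsPMF2 p) (a : α) (b : β) : p a b ≤ ∑ a', p a' b :=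
  Finset.single_le_sum (fun a' _ => hp.1 a' b) (Finset.mem_univ a)

lemma IsPMF2.marginal_le_one (hp : IsPMF2 p) (b : β) : ∑ a, p a b ≤ 1 := by
  rw [← hp.2, Finset.sum_comm]
  exact Finset.single_le_sum (f := fun b => ∑ a, p a b)
    (fun b _ => Finset.sum_nonneg fun a _ => hp.1 a b) (Finset.mem_univ b)

lemma IsPMF2.sum_prod (hp : IsPMF2 p) : ∑ ω : α × β, p ω.1 ω.2 = 1 := by
  rw [Fintype.sum_prod_type]
  exact hp.2

end Marginal

section DataProcessing

variable {𝒳 𝒴 𝒵 : Type*} [Fintype 𝒳] {p : (n : ℕ) → (Fin n → 𝒳) → (Fin n → 𝒵) → ℝ}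

lemma sInf_tendsto_sum_sum_eq_pLimsup {A B : ℕ → Type*} [∀ n, Fintype (A n)]
    [∀ n, Fintype (B n)] (P s : ∀ n, A n → B n → ℝ) :
    sInf {α : ℝ | Tendsto (fun n => ∑ a, ∑ b, if α < s n a b then P n a b else 0)
      atTop (𝓝 0)} = pLimsup (fun n (ω : A n × B n) => P n ω.1 ω.2)
      (fun n ω => s n ω.1 ω.2) := by
  unfold pLimsup tailProb
  simp only [Fintype.sum_prod_type]

lemma exists_tendsto_tailProb_selfInfoRate [Fintype 𝒵] (hp : ∀ n, IsPMF2 (p n)) :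
    ∃ α, Tendsto (tailProb (fun n (ω : (Fin n → 𝒳) × (Fin n → 𝒵)) => p n ω.1 ω.2)
      (fun n ω => selfInfoRate n (p n ω.1 ω.2 / ∑ x', p n x' ω.2)) α) atTop (𝓝 0) := by
  set K : ℝ := Fintype.card 𝒳 * Fintype.card 𝒵
  have hK : 0 ≤ K := by positivity
  refine ⟨Real.log (K + 1), tendsto_tailProb_of_le_pow (c := K)
    (r := Real.exp (-Real.log (K + 1))) (fun n ω => (hp n).1 _ _)
    (fun n => by simp [K, mul_pow]) (Real.exp_pos _).le ?_ fun n ω hpos hα => ?_⟩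
  · rw [Real.exp_neg, Real.exp_log (by positivity), ← div_eq_mul_inv, div_lt_one (by positivity)]
    linarith
  · have hS := hpos.trans_le ((hp n).le_marginal ω.1 ω.2)
    calc p n ω.1 ω.2 ≤ p n ω.1 ω.2 / ∑ x', p n x' ω.2 :=
          le_div_self hpos.le hS ((hp n).marginal_le_one ω.2)
      _ ≤ _ := le_exp_neg_pow_of_lt_selfInfoRate (Real.log_nonneg (by linarith))
          (div_pos hpos hS) hα

variable [DecidableEq 𝒴] (φ : (n : ℕ) → (Fin n → 𝒳) → (Fin n → 𝒵) → (Fin n → 𝒴))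

lemma le_pushJoint (hp : ∀ n x z, 0 ≤ p n x z) (n : ℕ) (x : Fin n → 𝒳) (z : Fin n → 𝒵) :
    p n x z ≤ pushJoint p φ n (φ n x z) z := by
  simpa [pushJoint] using
    Finset.single_le_sum (f := fun x' => if φ n x' z = φ n x z then p n x' z else 0)
    (fun x' _ => by split_ifs <;> simp [hp n x' z]) (Finset.mem_univ x)

lemma pushJoint_le_marginal (hp : ∀ n x z, 0 ≤ p n x z) (n : ℕ) (y : Fin n → 𝒴)
    (z : Fin n → 𝒵) : pushJoint p φ n y z ≤ ∑ x', p n x' z :=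
  Finset.sum_le_sum fun x' _ => by split_ifs <;> simp [hp n x' z]

variable {φ} in
lemma selfInfoRate_pushJoint_nonneg (hp : ∀ n x z, 0 ≤ p n x z) {n : ℕ} {x : Fin n → 𝒳}
    {z : Fin n → 𝒵} (hpos : 0 < p n x z) :
    0 ≤ selfInfoRate n (pushJoint p φ n (φ n x z) z / ∑ x', p n x' z) := by
  have hq := hpos.trans_le (le_pushJoint φ hp n x z)
  have hS := hq.trans_le (pushJoint_le_marginal φ hp n (φ n x z) z)
  exact selfInfoRate_nonneg n (div_pos hq hS)
    ((div_le_one hS).mpr (pushJoint_le_marginal φ hp n _ z))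

variable {φ} in
lemma selfInfoRate_pushJoint_le (hp : ∀ n x z, 0 ≤ p n x z) {n : ℕ} {x : Fin n → 𝒳}
    {z : Fin n → 𝒵} (hpos : 0 < p n x z) :
    selfInfoRate n (pushJoint p φ n (φ n x z) z / ∑ x', p n x' z)
      ≤ selfInfoRate n (p n x z / ∑ x', p n x' z) := by
  have hS := hpos.trans_le ((le_pushJoint φ hp n x z).trans (pushJoint_le_marginal φ hp n _ z))
  exact selfInfoRate_anti n (div_pos hpos hS)
    (div_le_div_of_nonneg_right (le_pushJoint φ hp n x z) hS.le)

end DataProcessing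

theorem stmt16_general {𝒳 𝒴 𝒵 : Type*} [Fintype 𝒳] [Fintype 𝒵] [DecidableEq 𝒴]
    (p : (n : ℕ) → (Fin n → 𝒳) → (Fin n → 𝒵) → ℝ) (hp : ∀ n, IsPMF2 (p n))
    (φ : (n : ℕ) → (Fin n → 𝒳) → (Fin n → 𝒵) → (Fin n → 𝒴)) :
    sInf {α : ℝ | Filter.Tendsto
        (fun n => ∑ x : Fin n → 𝒳, ∑ z : Fin n → 𝒵,
          if α < (1 / (n : ℝ)) *
              Real.log (1 / (pushJoint p φ n (φ n x z) z / (∑ x', p n x' z)))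
          then p n x z else 0)
        Filter.atTop (nhds 0)}
      ≤ specSupEnt p := by
  have hp0 : ∀ n x z, 0 ≤ p n x z := fun n => (hp n).1
  calc _ = pLimsup (fun n (ω : (Fin n → 𝒳) × (Fin n → 𝒵)) => p n ω.1 ω.2)
        (fun n ω => selfInfoRate n (pushJoint p φ n (φ n ω.1 ω.2) ω.2 / ∑ x', p n x' ω.2)) :=
        sInf_tendsto_sum_sum_eq_pLimsup p fun n x z =>
          selfInfoRate n (pushJoint p φ n (φ n x z) z / ∑ x', p n x' z)
    _ ≤ pLimsup (fun n (ω : (Fin n → 𝒳) × (Fin n → 𝒵)) => p n ω.1 ω.2)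
        (fun n ω => selfInfoRate n (p n ω.1 ω.2 / ∑ x', p n x' ω.2)) :=
        pLimsup_mono (fun n ω => hp0 n ω.1 ω.2) (fun n => (hp n).sum_prod)
          (fun _ _ => selfInfoRate_pushJoint_nonneg hp0) (fun _ _ => selfInfoRate_pushJoint_le hp0)
          (exists_tendsto_tailProb_selfInfoRate hp)
    _ = specSupEnt p := (sInf_tendsto_sum_sum_eq_pLimsup p fun n x z =>
          selfInfoRate n (p n x z / ∑ x', p n x' z)).symm

/-- Data processing for the spectral sup-entropy rate: for `Ỹ^n = φ_n(X^n,Z^n)`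
we have `H̄(X|Z) ≥ H̄(Ỹ|Z)`. Here `H̄(Ỹ|Z)` is computed on the original
probability space, evaluating the conditional probability of `Ỹ^n` given `Z^n`
at the realized value `φ_n(X^n, Z^n)`. -/
theorem stmt16 {𝒳 𝒴 𝒵 : Type*} [Fintype 𝒳] [Fintype 𝒴] [Fintype 𝒵] [DecidableEq 𝒴]
    (p : (n : ℕ) → (Fin n → 𝒳) → (Fin n → 𝒵) → ℝ) (hp : ∀ n, IsPMF2 (p n))
    (φ : (n : ℕ) → (Fin n → 𝒳) → (Fin n → 𝒵) → (Fin n → 𝒴)) :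
    sInf {α : ℝ | Filter.Tendsto
        (fun n => ∑ x : Fin n → 𝒳, ∑ z : Fin n → 𝒵,
          if α < (1 / (n : ℝ)) *
              Real.log (1 / (pushJoint p φ n (φ n x z) z / (∑ x', p n x' z)))
          then p n x z else 0)
        Filter.atTop (nhds 0)}
      ≤ specSupEnt p :=
  stmt16_general p hp φ
end

section
/- (Binary minimum cost formula.) Let 𝒳 = X̂ = {0,1}, X Bernoulli with P_X(0) = p ∈ [0, 1/2], c(x,x̂) = 1{x ≠ x̂}, and D ∈ [0, log 2]. Then min over joint distributions of (X, X̂) with I(X; X̂) ≤ D of E[c(X,X̂)] = h⁻¹(max{h(p) − D, 0}), where h(q) = −q log q − (1−q) log(1−q) and h⁻¹: [0, log 2] → [0, 1/2] is its inverse. -/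
/-!
Converse: `X` is recovered from `X̂` and the error indicator, so `H(X | X̂) ≤ h(Pr{X ≠ X̂})` and
`I(X; X̂) ≥ h(p) - h(Pr{X ≠ X̂})`; in elementary form this is Gibbs' inequality for the law of `X`
given `X̂` against the kernel that flips `X̂` with probability `Pr{X ≠ X̂}`.
Achievability: `X̂ ~ Bernoulli` passed through a binary symmetric channel with crossover `e ≤ p`
gives cost `e` and `I(X; X̂) = h(p) - h(e)`, once the law of `X̂` is tuned so that
`X ~ Bernoulli(p)`.
As `h` increases on `[0, 1/2]`, the least feasible cost is the `e ∈ [0, 1/2]` with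
`h(e) = max (h(p) - D) 0`.
-/

open scoped BigOperators

/-- Binary entropy function (natural logarithm). -/
noncomputable def binEnt (q : ℝ) : ℝ :=
  -(q * Real.log q) - (1 - q) * Real.log (1 - q)

open Real Finset

theorem binEnt_eq_binEntropy : binEnt = binEntropy := by
  ext q
  simp only [binEnt, binEntropy, log_inv]
  ring

theorem mul_log_mul_div_mul {q w P : ℝ} (hq : 0 ≤ q) (hw : 0 ≤ w) (hP : q * w ≤ P) :
    q * w * log (q * w / (P * q)) = q * (w * log w) - q * w * log P := by
  rcases hq.eq_or_lt with rfl | hq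
  · simp
  rcases hw.eq_or_lt with rfl | hw
  · simp
  have hP : 0 < P := (mul_pos hq hw).trans_le hP
  rw [show q * w / (P * q) = w / P by field_simp, log_div hw.ne' hP.ne']
  ring

theorem sub_le_mul_log_div {x y : ℝ} (hx : 0 ≤ x) (hy : 0 < y) : x - y ≤ x * log (x / y) := by
  rcases hx.eq_or_lt with rfl | hx
  · simpa using hy.le
  have h := mul_le_mul_of_nonneg_left (log_le_sub_one_of_pos (div_pos hy hx)) hx.le
  rw [log_div hy.ne' hx.ne', mul_sub_one, mul_div_cancel₀ _ hx.ne'] at h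
  rw [log_div hx.ne' hy.ne']
  linarith

theorem mul_log_le_mul_log_div_mul {r P Q s : ℝ} (hr : 0 ≤ r) (hP : r ≤ P) (hQ : r ≤ Q)
    (hs : r ≤ s) :
    r * log s - r * log P + (r - Q * s) ≤ r * log (r / (P * Q)) := by
  rcases hr.eq_or_lt with rfl | hr
  · simpa using mul_nonneg hQ hs
  have hP : 0 < P := hr.trans_le hP
  have hQ : 0 < Q := hr.trans_le hQ
  have hs : 0 < s := hr.trans_le hs
  have h := sub_le_mul_log_div hr.le (mul_pos hQ hs)
  rw [log_div hr.ne' (by positivity), log_mul hQ.ne' hs.ne'] at h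
  rw [log_div hr.ne' (by positivity), log_mul hP.ne' hQ.ne']
  linarith

section MutualInformation

variable {α β : Type*} [Fintype α] [Fintype β]

theorem MI_channel_eq (Q : β → ℝ) (W : α → β → ℝ) (hQ : ∀ z, 0 ≤ Q z) (hW : ∀ x z, 0 ≤ W x z)
    (hW1 : ∀ z, ∑ x, W x z = 1) :
    MI (fun x z => Q z * W x z) =
      ∑ x, negMulLog (∑ z, Q z * W x z) - ∑ z, Q z * ∑ x, negMulLog (W x z) := by
  have hcol (z : β) : ∑ x, Q z * W x z = Q z := by rw [← mul_sum, hW1, mul_one]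
  have hterm (x : α) (z : β) : Q z * W x z * log (Q z * W x z / ((∑ z', Q z' * W x z') * Q z)) =
      Q z * (W x z * log (W x z)) - Q z * W x z * log (∑ z', Q z' * W x z') :=
    mul_log_mul_div_mul (hQ z) (hW x z)
      (single_le_sum (f := fun z' => Q z' * W x z') (fun z' _ => mul_nonneg (hQ z') (hW x z'))
        (mem_univ z))
  simp only [MI, hcol, hterm, sum_sub_distrib, ← sum_mul, negMulLog, mul_sum]
  rw [sum_comm]
  simp only [sum_neg_distrib, mul_neg, neg_mul]
  ring

theorem sum_mul_log_add_sum_negMulLog_le_MI {r : α → β → ℝ} (hr : IsPMF2 r) (s : α → β → ℝ)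
    (hrs : ∀ x z, r x z ≤ s x z) (hs : ∀ z, ∑ x, s x z ≤ 1) :
    ∑ x, ∑ z, r x z * log (s x z) + ∑ x, negMulLog (∑ z, r x z) ≤ MI r := by
  obtain ⟨hr0, hr1⟩ := hr
  have hterm (x : α) (z : β) := mul_log_le_mul_log_div_mul (hr0 x z)
    (single_le_sum (f := r x) (fun z' _ => hr0 x z') (mem_univ z))
    (single_le_sum (f := fun x' => r x' z) (fun x' _ => hr0 x' z) (mem_univ x)) (hrs x z)
  have hQs : ∑ x, ∑ z, (∑ x', r x' z) * s x z ≤ 1 := by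
    rw [sum_comm]
    calc ∑ z, ∑ x, (∑ x', r x' z) * s x z = ∑ z, (∑ x', r x' z) * ∑ x, s x z := by
          simp only [mul_sum]
      _ ≤ ∑ z, (∑ x', r x' z) := sum_le_sum fun z _ =>
          mul_le_of_le_one_right (sum_nonneg fun x _ => hr0 x z) (hs z)
      _ = 1 := by rw [sum_comm, hr1]
  have hsum := sum_le_sum (s := univ) fun x _ => sum_le_sum fun z (_ : z ∈ univ) => hterm x z
  simp only [MI, sum_add_distrib, sum_sub_distrib, negMulLog, ← sum_mul, hr1] at hsum ⊢
  simp only [neg_mul, sum_neg_distrib]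
  linarith

end MutualInformation

noncomputable def hammingCost (r : Bool → Bool → ℝ) : ℝ :=
  ∑ x, ∑ z, r x z * (if x = z then 0 else 1)

theorem hammingCost_eq (r : Bool → Bool → ℝ) : hammingCost r = r false true + r true false := by
  simp [hammingCost, add_comm]

theorem binEntropy_sub_binEntropy_hammingCost_le_MI {r : Bool → Bool → ℝ} (hr : IsPMF2 r) :
    binEntropy (∑ z, r false z) - binEntropy (hammingCost r) ≤ MI r := by
  have hr0 := hr.1
  have hsum : r false false + r false true + r true false + r true true = 1 := by
    simpa [Fintype.sum_bool, add_comm, add_left_comm, add_assoc] using hr.2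
  have hflip (x z : Bool) : r x z ≤ if x = z then 1 - hammingCost r else hammingCost r := by
    rw [hammingCost_eq]
    cases x <;> cases z <;> simp <;>
      linarith [hr0 false false, hr0 false true, hr0 true false, hr0 true true]
  have h := sum_mul_log_add_sum_negMulLog_le_MI hr _ hflip (by intro z; cases z <;> simp)
  simp only [Fintype.sum_bool, Bool.false_eq_true, Bool.true_eq_false, ↓reduceIte,
    binEntropy_eq_negMulLog_add_negMulLog_one_sub, hammingCost_eq] at h ⊢
  rw [show 1 - (r false true + r false false) = r true true + r true false by linarith]
  simp only [negMulLog] at h ⊢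
  linear_combination h - log (1 - (r false true + r true false)) * hsum

/-- The backward test channel: `X̂` is `false` with probability `q`, and `X` is `X̂` flipped with
probability `e`. -/
def bscJoint (q e : ℝ) (x z : Bool) : ℝ :=
  (if z then 1 - q else q) * (if x = z then 1 - e else e)

section BSC

variable {q e : ℝ}

theorem isPMF2_bscJoint (hq : q ∈ Set.Icc (0 : ℝ) 1) (he : e ∈ Set.Icc (0 : ℝ) 1) :
    IsPMF2 (bscJoint q e) := by
  obtain ⟨hq0, hq1⟩ := hq
  obtain ⟨he0, he1⟩ := he
  refine ⟨fun x z => mul_nonneg ?_ ?_, ?_⟩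
  · split_ifs <;> linarith
  · split_ifs <;> linarith
  · simp only [Fintype.sum_bool, Bool.false_eq_true, Bool.true_eq_false, ↓reduceIte, bscJoint]
    ring

theorem sum_bscJoint (x : Bool) :
    ∑ z, bscJoint q e x z =
      if x then 1 - (q * (1 - e) + (1 - q) * e) else q * (1 - e) + (1 - q) * e := by
  cases x <;>
    simp only [Fintype.sum_bool, Bool.false_eq_true, Bool.true_eq_false, ↓reduceIte, bscJoint] <;>
    ring

theorem hammingCost_bscJoint : hammingCost (bscJoint q e) = e := by
  simp only [hammingCost_eq, bscJoint, Bool.false_eq_true, Bool.true_eq_false, ↓reduceIte]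
  ring

theorem MI_bscJoint (hq : q ∈ Set.Icc (0 : ℝ) 1) (he : e ∈ Set.Icc (0 : ℝ) 1) :
    MI (bscJoint q e) = binEntropy (q * (1 - e) + (1 - q) * e) - binEntropy e := by
  obtain ⟨hq0, hq1⟩ := hq
  obtain ⟨he0, he1⟩ := he
  unfold bscJoint
  rw [MI_channel_eq]
  · simp only [Fintype.sum_bool, Bool.false_eq_true, Bool.true_eq_false, ↓reduceIte,
      binEntropy_eq_negMulLog_add_negMulLog_one_sub]
    rw [show 1 - (q * (1 - e) + (1 - q) * e) = (1 - q) * (1 - e) + q * e by ring,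
      show q * (1 - e) + (1 - q) * e = (1 - q) * e + q * (1 - e) by ring]
    ring
  · intro z; split_ifs <;> linarith
  · intro x z; split_ifs <;> linarith
  · intro z; cases z <;> simp

end BSC

theorem exists_bsc_input {p e : ℝ} (hep : e ≤ p) (hp : p ≤ 1 / 2) :
    ∃ q ∈ Set.Icc (0 : ℝ) 1, q * (1 - e) + (1 - q) * e = p :=
  intermediate_value_Icc zero_le_one (by fun_prop) ⟨by simpa using hep, by simp; linarith⟩

theorem exists_isPMF2_MI_eq_hammingCost_eq {p e : ℝ} (he : 0 ≤ e) (hep : e ≤ p)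
    (hp : p ≤ 1 / 2) :
    ∃ r : Bool → Bool → ℝ, IsPMF2 r ∧ (∀ x, ∑ z, r x z = if x then 1 - p else p) ∧
      MI r = binEntropy p - binEntropy e ∧ hammingCost r = e := by
  obtain ⟨q, hq, rfl⟩ := exists_bsc_input hep hp
  have he' : e ∈ Set.Icc (0 : ℝ) 1 := ⟨he, by linarith⟩
  exact ⟨bscJoint q e, isPMF2_bscJoint hq he', sum_bscJoint, MI_bscJoint hq he',
    hammingCost_bscJoint⟩

theorem hammingCost_mem_Icc {r : Bool → Bool → ℝ} (hr : IsPMF2 r) :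
    hammingCost r ∈ Set.Icc (0 : ℝ) 1 := by
  obtain ⟨hr0, hr1⟩ := hr
  simp only [Fintype.sum_bool] at hr1
  rw [hammingCost_eq]
  constructor <;> linarith [hr0 false false, hr0 false true, hr0 true false, hr0 true true]

theorem exists_binEntropy_eq {t : ℝ} (ht : t ∈ Set.Icc 0 (log 2)) :
    ∃ e ∈ Set.Icc (0 : ℝ) (1 / 2), binEntropy e = t :=
  intermediate_value_Icc (by norm_num) binEntropy_continuous.continuousOn (by simpa using ht)

theorem le_of_binEntropy_le_binEntropy {a b : ℝ} (ha : a ∈ Set.Icc (0 : ℝ) (1 / 2)) (hb : 0 ≤ b)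
    (h : binEntropy a ≤ binEntropy b) : a ≤ b := by
  rcases le_total b (1 / 2) with hb2 | hb2
  · exact (binEntropy_strictMonoOn.le_iff_le (by simpa using ha) ⟨hb, by linarith⟩).1 h
  · exact ha.2.trans hb2

def feasibleCosts (p D : ℝ) : Set ℝ :=
  {v | ∃ r : Bool → Bool → ℝ, IsPMF2 r ∧ (∀ x, ∑ z, r x z = if x then 1 - p else p) ∧ MI r ≤ D ∧
    v = hammingCost r}

theorem isLeast_feasibleCosts {p D e : ℝ} (hp : p ∈ Set.Icc (0 : ℝ) (1 / 2)) (hD : 0 ≤ D)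
    (he : e ∈ Set.Icc (0 : ℝ) (1 / 2)) (hhe : binEntropy e = max (binEntropy p - D) 0) :
    IsLeast (feasibleCosts p D) e := by
  have hentropy_nonneg : 0 ≤ binEntropy p := binEntropy_nonneg hp.1 (by linarith [hp.2])
  constructor
  · have hep : e ≤ p :=
      le_of_binEntropy_le_binEntropy he hp.1 (hhe ▸ max_le (by linarith) hentropy_nonneg)
    obtain ⟨r, hr, hrow, hMI, hcost⟩ := exists_isPMF2_MI_eq_hammingCost_eq he.1 hep hp.2
    exact ⟨r, hr, hrow, by linarith [le_max_left (binEntropy p - D) 0], hcost.symm⟩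
  · rintro v ⟨r, hr, hrow, hMI, rfl⟩
    have hconv := binEntropy_sub_binEntropy_hammingCost_le_MI hr
    have hcost := hammingCost_mem_Icc hr
    rw [hrow false, if_neg Bool.false_ne_true] at hconv
    refine le_of_binEntropy_le_binEntropy he hcost.1 (hhe ▸ max_le (by linarith) ?_)
    exact binEntropy_nonneg hcost.1 hcost.2

/-- Binary minimum cost formula: for a Bernoulli(`p`) source, Hamming cost, and
leakage constraint `I(X;X̂) ≤ D`, the minimum expected cost is
`h⁻¹(max{h(p) − D, 0})`, expressed by saying the minimum lies in `[0,1/2]`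
and its `binEnt`-value is `max{h(p) − D, 0}`. -/
theorem stmt17 (p D : ℝ) (hp : p ∈ Set.Icc (0 : ℝ) (1 / 2))
    (hD : D ∈ Set.Icc (0 : ℝ) (Real.log 2)) :
    sInf {v | ∃ r : Bool → Bool → ℝ, IsPMF2 r ∧
        (∀ x, ∑ z, r x z = if x then 1 - p else p) ∧ MI r ≤ D ∧
        v = ∑ x, ∑ z, r x z * (if x = z then 0 else 1)}
      ∈ Set.Icc (0 : ℝ) (1 / 2) ∧
    binEnt (sInf {v | ∃ r : Bool → Bool → ℝ, IsPMF2 r ∧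
        (∀ x, ∑ z, r x z = if x then 1 - p else p) ∧ MI r ≤ D ∧
        v = ∑ x, ∑ z, r x z * (if x = z then 0 else 1)})
      = max (binEnt p - D) 0 := by
  have ht : max (binEntropy p - D) 0 ∈ Set.Icc 0 (log 2) :=
    ⟨le_max_right _ _,
      max_le (by linarith [binEntropy_le_log_two (p := p), hD.1]) (log_nonneg one_le_two)⟩
  obtain ⟨e, he, hhe⟩ := exists_binEntropy_eq ht
  show sInf (feasibleCosts p D) ∈ _ ∧ binEnt (sInf (feasibleCosts p D)) = _
  rw [binEnt_eq_binEntropy, (isLeast_feasibleCosts hp hD.1 he hhe).csInf_eq]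
  exact ⟨he, hhe⟩
end
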